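/- arXiv:1812.08698 — 7 statements merged into one kernel-verified Lean document; each statement's English description precedes it below -/
import Mathlib

section
/- The lattice A_4^∨(5) satisfies the condition Norm_2: for every x ∈ (1/5)A_4 there exists h ∈ (1/5)A_4 such that x − h ∈ A_4^∨ and 5⟨h,h⟩ ≤ 2. -/
open scoped BigOperators

noncomputable section

/-- The standard bilinear form `⟨x,y⟩ = ∑ xᵢ yᵢ` on `ℚ^5`. -/
def form (x y : Fin 5 → ℚ) : ℚ := ∑ i, x i * y i

/-- The root lattice `A₄ = {a ∈ ℤ^5 : a₁ + ⋯ + a₅ = 0}` inside `ℚ^5`. -/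
def A4 : AddSubgroup (Fin 5 → ℚ) where
  carrier := {a | (∀ i, ∃ n : ℤ, a i = (n : ℚ)) ∧ ∑ i, a i = 0}
  zero_mem' := ⟨fun _ => ⟨0, by simp⟩, by simp⟩
  add_mem' := by
    rintro a b ⟨ha, ha0⟩ ⟨hb, hb0⟩
    constructor
    · intro i
      obtain ⟨n, hn⟩ := ha i
      obtain ⟨m, hm⟩ := hb i
      exact ⟨n + m, by push_cast [Pi.add_apply, hn, hm]; ring⟩
    · simp [Pi.add_apply, Finset.sum_add_distrib, ha0, hb0]
  neg_mem' := by
    rintro a ⟨ha, ha0⟩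
    constructor
    · intro i
      obtain ⟨n, hn⟩ := ha i
      exact ⟨-n, by push_cast [Pi.neg_apply, hn]; ring⟩
    · simp [Pi.neg_apply, Finset.sum_neg_distrib, ha0]

/-- The fundamental weight `w₁ = (4,-1,-1,-1,-1)/5` of `A₄`. -/
def w1 : Fin 5 → ℚ := ![4/5, -1/5, -1/5, -1/5, -1/5]
/-- The fundamental weight `w₂ = (3,3,-2,-2,-2)/5` of `A₄`. -/
def w2 : Fin 5 → ℚ := ![3/5, 3/5, -2/5, -2/5, -2/5]
/-- The fundamental weight `w₃ = (2,2,2,-3,-3)/5` of `A₄`. -/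
def w3 : Fin 5 → ℚ := ![2/5, 2/5, 2/5, -3/5, -3/5]
/-- The fundamental weight `w₄ = (1,1,1,1,-4)/5` of `A₄`. -/
def w4 : Fin 5 → ℚ := ![1/5, 1/5, 1/5, 1/5, -4/5]

/-- The weight lattice `A₄^∨ = ℤw₁ + ℤw₂ + ℤw₃ + ℤw₄`.  The rescaled lattice `A₄^∨(5)`
is this group equipped with the bilinear form `5⟨·,·⟩`. -/
def A4dual : AddSubgroup (Fin 5 → ℚ) := AddSubgroup.closure {w1, w2, w3, w4}

/-- The dual lattice `(1/5)A₄ = {a/5 : a ∈ A₄}` of `A₄^∨(5)`. -/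
def fifthA4 : AddSubgroup (Fin 5 → ℚ) :=
  A4.map (DistribMulAction.toAddMonoidHom (Fin 5 → ℚ) ((5 : ℚ)⁻¹))

/-- The hyperplane `V = {x ∈ ℚ^5 : x₁ + ⋯ + x₅ = 0}`. -/
def V0 : Submodule ℚ (Fin 5 → ℚ) where
  carrier := {x | ∑ i, x i = 0}
  zero_mem' := by simp
  add_mem' := by
    intro a b ha hb
    simp only [Set.mem_setOf_eq] at *
    simp [Pi.add_apply, Finset.sum_add_distrib, ha, hb]
  smul_mem' := by
    intro c a ha
    simp only [Set.mem_setOf_eq] at *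
    simp [Pi.smul_apply, ← Finset.mul_sum, ha]

/-- The discriminant group `D = ((1/5)A₄)/A₄^∨` of the lattice `A₄^∨(5)`. -/
abbrev Disc := fifthA4 ⧸ (A4dual.addSubgroupOf fifthA4)

/-!
Write `x = a / 5` and `h = u / 5` with `a, u ∈ A₄`. Then `x - h ∈ A₄^∨` means `a - u ∈ 5 A₄^∨`,
and `5⟨h, h⟩ ≤ 2` means `|u|² ≤ 10`. Take `u` of minimal norm in the coset `a + 5 A₄^∨`. It is
no longer than its translates by `±5(eᵢ - 𝟙/5)` and `±5(eᵢ + eⱼ - 2𝟙/5)`, which forces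
`|uᵢ| ≤ 2` and `|uᵢ + uⱼ| ≤ 3`; an integer vector with zero sum and these bounds has norm at
most `10`, with equality at the permutations of `(2, 1, 0, -1, -2)`.
-/

lemma two_mul_abs_sum_mul_le_sum_sq {ι : Type*} [Fintype ι] {L : AddSubgroup (ι → ℤ)}
    {a u w : ι → ℤ} (hu : a - u ∈ L) (hmin : ∀ v, a - v ∈ L → ∑ i, u i ^ 2 ≤ ∑ i, v i ^ 2)
    (hw : w ∈ L) : 2 * |∑ i, u i * w i| ≤ ∑ i, w i ^ 2 := by
  have h_add := hmin (u + w) (by convert sub_mem hu hw using 1; abel)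
  have h_sub := hmin (u - w) (by convert add_mem hu hw using 1; abel)
  simp only [Pi.add_apply, Pi.sub_apply, add_sq, sub_sq, Finset.sum_add_distrib,
    Finset.sum_sub_distrib, ← Finset.mul_sum, mul_assoc] at h_add h_sub
  rw [← abs_two, ← abs_mul, abs_le]
  constructor <;> linarith

lemma exists_sub_mem_forall_sum_sq_le {ι : Type*} [Fintype ι] (L : AddSubgroup (ι → ℤ))
    (a : ι → ℤ) : ∃ u, a - u ∈ L ∧ ∀ v, a - v ∈ L → ∑ i, u i ^ 2 ≤ ∑ i, v i ^ 2 := by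
  obtain ⟨n, ⟨u, hu, rfl⟩, hmin⟩ := Int.exists_least_of_bdd
    (P := fun n => ∃ u, a - u ∈ L ∧ ∑ i, u i ^ 2 = n)
    ⟨0, fun _ ⟨_, _, hn⟩ => hn ▸ Finset.sum_nonneg fun _ _ => sq_nonneg _⟩
    ⟨_, a, by simp, rfl⟩
  exact ⟨u, hu, fun v hv => hmin _ ⟨v, hv, rfl⟩⟩

/-- `5 A₄^∨`, as a sublattice of `ℤ⁵`. -/
def fiveA4dual : AddSubgroup (Fin 5 → ℤ) where
  carrier := {w | ∑ i, w i = 0 ∧ ∃ d : ℤ, ∀ i, (5 : ℤ) ∣ w i - d}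
  zero_mem' := ⟨by simp, 0, by simp⟩
  add_mem' := by
    rintro v w ⟨hv, d, hd⟩ ⟨hw, e, he⟩
    refine ⟨by simp [Finset.sum_add_distrib, hv, hw], d + e, fun i => ?_⟩
    simpa only [Pi.add_apply, add_sub_add_comm] using dvd_add (hd i) (he i)
  neg_mem' := by
    rintro w ⟨hw, d, hd⟩
    refine ⟨by simp [hw], -d, fun i => ?_⟩
    simpa only [Pi.neg_apply, neg_sub_neg] using dvd_sub_comm.mp (hd i)

/-- `5` times the orthogonal projection of `eᵢ` to `V`; thus `fiveW 0 = 5 w₁`. -/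
def fiveW (i : Fin 5) : Fin 5 → ℤ := Pi.single i 5 - 1

lemma fiveW_mem_fiveA4dual (i : Fin 5) : fiveW i ∈ fiveA4dual := by
  refine ⟨by simp [fiveW, Finset.sum_sub_distrib], -1, fun k => ?_⟩
  by_cases hk : k = i <;> simp [fiveW, hk]

lemma sum_mul_fiveW (u : Fin 5 → ℤ) (i : Fin 5) :
    ∑ k, u k * fiveW i k = 5 * u i - ∑ k, u k := by
  simp [fiveW, mul_sub, Finset.sum_sub_distrib, Pi.single_apply, mul_comm]

lemma sum_fiveW_sq (i : Fin 5) : ∑ k, fiveW i k ^ 2 = 20 := by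
  revert i; decide

lemma sum_fiveW_add_fiveW_sq {i j : Fin 5} (hij : i ≠ j) :
    ∑ k, (fiveW i k + fiveW j k) ^ 2 = 30 := by
  revert i j; decide

lemma sum_sq_le_ten_of_abs_le (u : Fin 5 → ℤ) (hsum : ∑ i, u i = 0)
    (h₁ : ∀ i, |u i| ≤ 2) (h₂ : ∀ i j, i ≠ j → |u i + u j| ≤ 3) : ∑ i, u i ^ 2 ≤ 10 := by
  have sq_cases : ∀ i, u i = -2 ∧ u i ^ 2 = 4 ∨ u i = -1 ∧ u i ^ 2 = 1 ∨ u i = 0 ∧ u i ^ 2 = 0 ∨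
      u i = 1 ∧ u i ^ 2 = 1 ∨ u i = 2 ∧ u i ^ 2 = 4 := by
    intro i
    obtain ⟨hl, hr⟩ := abs_le.mp (h₁ i)
    interval_cases u i <;> simp
  have := sq_cases 0; have := sq_cases 1; have := sq_cases 2; have := sq_cases 3
  have := sq_cases 4
  have := h₂ 0 1; have := h₂ 0 2; have := h₂ 0 3; have := h₂ 0 4; have := h₂ 1 2
  have := h₂ 1 3; have := h₂ 1 4; have := h₂ 2 3; have := h₂ 2 4; have := h₂ 3 4
  simp only [Fin.sum_univ_five, ne_eq, Fin.reduceEq, not_false_eq_true, forall_const,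
    abs_le] at *
  omega

lemma exists_sub_mem_fiveA4dual_sum_sq_le_ten (a : Fin 5 → ℤ) (ha : ∑ i, a i = 0) :
    ∃ u, a - u ∈ fiveA4dual ∧ ∑ i, u i = 0 ∧ ∑ i, u i ^ 2 ≤ 10 := by
  obtain ⟨u, hu, hmin⟩ := exists_sub_mem_forall_sum_sq_le fiveA4dual a
  have hu0 : ∑ i, u i = 0 := by
    have := hu.1
    simp only [Pi.sub_apply, Finset.sum_sub_distrib, ha] at this
    linarith
  have hshort := fun w hw => two_mul_abs_sum_mul_le_sum_sq hu hmin (w := w) hw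
  refine ⟨u, hu, hu0, sum_sq_le_ten_of_abs_le u hu0 (fun i => ?_) (fun i j hij => ?_)⟩
  · have := hshort _ (fiveW_mem_fiveA4dual i)
    rw [sum_mul_fiveW, hu0, sum_fiveW_sq, sub_zero, abs_mul] at this
    norm_num at this
    linarith
  · have := hshort _ (add_mem (fiveW_mem_fiveA4dual i) (fiveW_mem_fiveA4dual j))
    have hinner : ∑ k, u k * (fiveW i k + fiveW j k) = 5 * (u i + u j) := by
      simp only [mul_add, Finset.sum_add_distrib, sum_mul_fiveW, hu0]
      ring
    simp only [Pi.add_apply] at this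
    rw [hinner, sum_fiveW_add_fiveW_sq hij, abs_mul] at this
    norm_num at this
    linarith

lemma mem_A4dual_of_eq_intCast_add {v : Fin 5 → ℚ} (hv : ∑ i, v i = 0) (m : Fin 5 → ℤ) (t : ℚ)
    (hm : ∀ i, v i = m i + t) : v ∈ A4dual := by
  have hw : ∀ w ∈ ({w1, w2, w3, w4} : Set (Fin 5 → ℚ)), w ∈ A4dual :=
    fun _ hw => AddSubgroup.subset_closure hw
  have hv_eq : v = (m 0 - m 1) • w1 + (m 1 - m 2) • w2 + (m 2 - m 3) • w3 + (m 3 - m 4) • w4 := by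
    rw [Fin.sum_univ_five, hm 0, hm 1, hm 2, hm 3, hm 4] at hv
    funext i
    fin_cases i <;> simp [w1, w2, w3, w4, hm] <;> linarith
  rw [hv_eq]
  exact add_mem (add_mem (add_mem (zsmul_mem (hw _ (by simp)) _) (zsmul_mem (hw _ (by simp)) _))
    (zsmul_mem (hw _ (by simp)) _)) (zsmul_mem (hw _ (by simp)) _)

def fifth (u : Fin 5 → ℤ) : Fin 5 → ℚ := (5 : ℚ)⁻¹ • fun i => (u i : ℚ)

lemma fifth_sub (u v : Fin 5 → ℤ) : fifth (u - v) = fifth u - fifth v := by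
  funext i
  simp only [fifth, Pi.sub_apply, Int.cast_sub, Pi.smul_apply, smul_eq_mul]
  ring

lemma fifth_mem_fifthA4 {u : Fin 5 → ℤ} (hu : ∑ i, u i = 0) : fifth u ∈ fifthA4 :=
  ⟨fun i => (u i : ℚ), ⟨fun i => ⟨u i, rfl⟩, show ∑ i, (u i : ℚ) = 0 by exact_mod_cast hu⟩, rfl⟩

lemma fifth_mem_A4dual {w : Fin 5 → ℤ} (hw : w ∈ fiveA4dual) : fifth w ∈ A4dual := by
  obtain ⟨hsum, d, hd⟩ := hw
  choose m hm using hd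
  refine mem_A4dual_of_eq_intCast_add ?_ m (d / 5) fun i => ?_
  · simp only [fifth, Pi.smul_apply, smul_eq_mul, ← Finset.mul_sum, mul_eq_zero]
    exact Or.inr (by exact_mod_cast hsum)
  · have : (w i : ℚ) = 5 * m i + d := by exact_mod_cast (by linarith [hm i] : w i = 5 * m i + d)
    simp only [fifth, Pi.smul_apply, this, smul_eq_mul]
    ring

lemma five_mul_form_fifth (u : Fin 5 → ℤ) :
    5 * form (fifth u) (fifth u) = ((∑ i, u i ^ 2 : ℤ) : ℚ) / 5 := by
  simp only [form, fifth, Pi.smul_apply, smul_eq_mul, Int.cast_sum, Int.cast_pow,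
    Finset.mul_sum, Finset.sum_div]
  congr 1; funext i; ring

/-- The lattice `A₄^∨(5)` satisfies the condition `Norm₂`: every class of
the dual lattice `(1/5)A₄` modulo `A₄^∨` contains a vector of norm (w.r.t. `5⟨·,·⟩`)
at most `2`. -/
theorem A4dual5_satisfies_Norm2 :
    ∀ x ∈ fifthA4, ∃ h ∈ fifthA4, x - h ∈ A4dual ∧ 5 * form h h ≤ 2 := by
  rintro _ ⟨_, ⟨ha_int, ha_sum⟩, rfl⟩
  choose a ha using ha_int
  obtain rfl : _ = fun i => (a i : ℚ) := funext ha
  have ha0 : ∑ i, a i = 0 := by beta_reduce at ha_sum; exact_mod_cast ha_sum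
  obtain ⟨u, hu, hu0, hnorm⟩ := exists_sub_mem_fiveA4dual_sum_sq_le_ten a ha0
  refine ⟨fifth u, fifth_mem_fifthA4 hu0, ?_, ?_⟩
  · exact fifth_sub a u ▸ fifth_mem_A4dual hu
  · rw [five_mul_form_fifth]
    have : ((∑ i, u i ^ 2 : ℤ) : ℚ) ≤ 10 := by exact_mod_cast hnorm
    linarith
end
end

section
/- Any two distinct vectors of norm 2/5 in the dual lattice of A_4^∨(5) are inequivalent modulo A_4^∨: if a, b ∈ A_4 satisfy ⟨a,a⟩ = ⟨b,b⟩ = 2 and (a − b)/5 ∈ A_4^∨, then a = b. Consequently the vectors a/5 with a ∈ A_4, ⟨a,a⟩ = 2 represent exactly 20 distinct classes in D. -/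
open scoped BigOperators

noncomputable section

/-!
The vectors of norm 2 in `A₄` are the twenty roots `eᵢ - eⱼ`, `i ≠ j`. Every fundamental weight is
an integer vector plus a constant vector, so the coordinates of a vector of `A₄^∨` differ pairwise
by integers. If `a`, `b` are roots and `(a - b)/5 ∈ A₄^∨`, the coordinates of `(a - b)/5` are at
most `2/5` in absolute value, so their pairwise differences are integers of absolute value `< 1`:
`(a - b)/5` is constant, and since its coordinates sum to `0` it vanishes. Hence `a ↦ a/5 + A₄^∨`
is injective on the roots and hits exactly `20` classes.
-/

open Finset

section RootVectors

variable {ι : Type*}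

def rootVector [DecidableEq ι] (i j : ι) : ι → ℚ := Pi.single i 1 - Pi.single j 1

lemma rootVector_apply_isInt [DecidableEq ι] (i j k : ι) : ∃ n : ℤ, rootVector i j k = n :=
  ⟨(Pi.single i 1 - Pi.single j 1 : ι → ℤ) k, by
    simp only [rootVector, Pi.sub_apply, Pi.single_apply]; split_ifs <;> simp⟩

lemma sum_rootVector [Fintype ι] [DecidableEq ι] (i j : ι) : ∑ k, rootVector i j k = 0 := by
  simp [rootVector, sum_sub_distrib]

lemma sum_mul_rootVector [Fintype ι] [DecidableEq ι] (x : ι → ℚ) (i j : ι) :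
    ∑ k, x k * rootVector i j k = x i - x j := by
  simp [rootVector, mul_sub, sum_sub_distrib, Pi.single_apply]

lemma rootVector_apply_eq_one_iff [DecidableEq ι] {i j k : ι} (hij : i ≠ j) :
    rootVector i j k = 1 ↔ k = i := by
  by_cases hki : k = i <;> by_cases hkj : k = j <;> simp_all [rootVector]; norm_num

lemma rootVector_apply_eq_neg_one_iff [DecidableEq ι] {i j k : ι} (hij : i ≠ j) :
    rootVector i j k = -1 ↔ k = j := by
  by_cases hki : k = i <;> by_cases hkj : k = j <;> simp_all [rootVector]; norm_num

lemma sum_rootVector_mul_self [Fintype ι] [DecidableEq ι] {i j : ι} (hij : i ≠ j) :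
    ∑ k, rootVector i j k * rootVector i j k = 2 := by
  rw [sum_mul_rootVector, (rootVector_apply_eq_one_iff hij).2 rfl,
    (rootVector_apply_eq_neg_one_iff hij).2 rfl]
  norm_num

lemma rootVector_injOn_offDiag [Fintype ι] [DecidableEq ι] :
    Set.InjOn (fun p : ι × ι => rootVector p.1 p.2) (univ.offDiag : Finset (ι × ι)) := by
  rintro ⟨i, j⟩ hij ⟨k, l⟩ hkl h
  simp only [mem_coe, mem_offDiag, mem_univ, true_and] at hij hkl h
  refine Prod.ext ((rootVector_apply_eq_one_iff hkl).1 ?_)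
    ((rootVector_apply_eq_neg_one_iff hkl).1 ?_)
  · rw [← h, rootVector_apply_eq_one_iff hij]
  · rw [← h, rootVector_apply_eq_neg_one_iff hij]

lemma eq_neg_one_or_zero_or_one_of_sum_mul_self_eq_two [Fintype ι] {x : ι → ℚ}
    (hint : ∀ k, ∃ n : ℤ, x k = n) (hsq : ∑ k, x k * x k = 2) (k : ι) :
    x k = -1 ∨ x k = 0 ∨ x k = 1 := by
  obtain ⟨n, hn⟩ := hint k
  have hle : x k * x k ≤ 2 :=
    hsq ▸ single_le_sum (f := fun k => x k * x k) (fun k _ => mul_self_nonneg _) (mem_univ k)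
  rw [hn] at hle ⊢
  have hn2 : n * n ≤ 2 := by exact_mod_cast hle
  have hlo : -1 ≤ n := by nlinarith
  have hhi : n ≤ 1 := by nlinarith
  interval_cases n <;> simp

lemma exists_eq_one_of_sum_eq_zero [Fintype ι] {x : ι → ℚ} (hint : ∀ k, ∃ n : ℤ, x k = n)
    (hsum : ∑ k, x k = 0) (hsq : ∑ k, x k * x k = 2) : ∃ i, x i = 1 := by
  by_contra! hne
  have hnonpos : ∀ k ∈ univ, x k ≤ 0 := fun k _ => by
    rcases eq_neg_one_or_zero_or_one_of_sum_mul_self_eq_two hint hsq k with h | h | h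
    exacts [h ▸ by norm_num, h.le, absurd h (hne k)]
  have hzero := (sum_eq_zero_iff_of_nonpos hnonpos).1 hsum
  rw [sum_congr rfl fun k hk => by rw [hzero k hk, mul_zero]] at hsq
  simp at hsq

lemma exists_eq_rootVector [Fintype ι] [DecidableEq ι] {x : ι → ℚ}
    (hint : ∀ k, ∃ n : ℤ, x k = n) (hsum : ∑ k, x k = 0) (hsq : ∑ k, x k * x k = 2) :
    ∃ i j, i ≠ j ∧ x = rootVector i j := by
  obtain ⟨i, hi⟩ := exists_eq_one_of_sum_eq_zero hint hsum hsq
  obtain ⟨j, hj⟩ := exists_eq_one_of_sum_eq_zero (x := -x)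
    (fun k => let ⟨n, hn⟩ := hint k; ⟨-n, by simp [hn]⟩) (by simp [hsum]) (by simpa using hsq)
  have hij : i ≠ j := by rintro rfl; simp only [Pi.neg_apply] at hj; linarith
  refine ⟨i, j, hij, ?_⟩
  -- `‖x - r‖² = ‖x‖² - 2⟨x, r⟩ + ‖r‖² = 2 - 2 · 2 + 2`
  set r := rootVector i j
  have hdist : ∑ k, (x k - r k) * (x k - r k) = 0 := by
    have hexp : ∑ k, (x k - r k) * (x k - r k)
        = ∑ k, x k * x k - 2 * ∑ k, x k * r k + ∑ k, r k * r k := by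
      simp only [mul_sum, ← sum_sub_distrib, ← sum_add_distrib]
      exact sum_congr rfl fun k _ => by ring
    rw [hexp, hsq, sum_mul_rootVector, sum_rootVector_mul_self hij, hi]
    simp only [Pi.neg_apply] at hj
    linarith
  funext k
  have := (sum_eq_zero_iff_of_nonneg fun k _ => mul_self_nonneg (x k - r k)).1 hdist k (mem_univ k)
  exact sub_eq_zero.1 (mul_self_eq_zero.1 this)

end RootVectors

def integralDifferences (ι : Type*) : AddSubgroup (ι → ℚ) where
  carrier := {x | ∀ i j, ∃ m : ℤ, x i - x j = m}
  zero_mem' _ _ := ⟨0, by simp⟩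
  add_mem' {x y} hx hy i j := by
    obtain ⟨m, hm⟩ := hx i j
    obtain ⟨n, hn⟩ := hy i j
    exact ⟨m + n, by push_cast [Pi.add_apply]; linarith⟩
  neg_mem' {x} hx i j := by
    obtain ⟨m, hm⟩ := hx i j
    exact ⟨-m, by push_cast [Pi.neg_apply]; linarith⟩

lemma mem_integralDifferences_of_eq_add_const {ι : Type*} {x : ι → ℚ} (n : ι → ℤ) (c : ℚ)
    (h : ∀ i, x i = n i + c) : x ∈ integralDifferences ι := fun i j =>
  ⟨n i - n j, by rw [h, h]; push_cast; ring⟩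

lemma eq_zero_of_mem_integralDifferences {ι : Type*} [Fintype ι] {x : ι → ℚ}
    (hx : x ∈ integralDifferences ι) (hsmall : ∀ i, |x i| < 1 / 2) (hsum : ∑ i, x i = 0) :
    x = 0 := by
  have hconst : ∀ i j, x j = x i := fun i j => by
    obtain ⟨m, hm⟩ := hx j i
    have : |(m : ℚ)| < 1 := hm ▸ (abs_sub _ _).trans_lt (by linarith [hsmall i, hsmall j])
    rw [← Int.cast_abs, ← Int.cast_one, Int.cast_lt, Int.abs_lt_one_iff] at this
    simpa [this, sub_eq_zero] using hm
  funext i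
  rw [sum_congr rfl fun j _ => hconst i j, sum_const, nsmul_eq_mul] at hsum
  exact (mul_eq_zero.1 hsum).resolve_left (Nat.cast_ne_zero.2 (card_pos.2 ⟨i, mem_univ i⟩).ne')

lemma A4dual_le_integralDifferences : A4dual ≤ integralDifferences (Fin 5) := by
  refine (AddSubgroup.closure_le _).2 ?_
  rintro w (rfl | rfl | rfl | rfl)
  · exact mem_integralDifferences_of_eq_add_const ![1, 0, 0, 0, 0] (-1 / 5)
      (by intro i; fin_cases i <;> norm_num [w1])
  · exact mem_integralDifferences_of_eq_add_const ![1, 1, 0, 0, 0] (-2 / 5)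
      (by intro i; fin_cases i <;> norm_num [w2])
  · exact mem_integralDifferences_of_eq_add_const ![1, 1, 1, 0, 0] (-3 / 5)
      (by intro i; fin_cases i <;> norm_num [w3])
  · exact mem_integralDifferences_of_eq_add_const ![1, 1, 1, 1, 0] (-4 / 5)
      (by intro i; fin_cases i <;> norm_num [w4])

lemma abs_le_one_of_mem_A4 {a : Fin 5 → ℚ} (ha : a ∈ A4) (ha2 : form a a = 2) (i : Fin 5) :
    |a i| ≤ 1 := by
  rcases eq_neg_one_or_zero_or_one_of_sum_mul_self_eq_two ha.1 ha2 i with h | h | h <;>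
    simp [h]

lemma eq_of_smul_sub_mem_A4dual {a b : Fin 5 → ℚ} (ha : a ∈ A4) (hb : b ∈ A4)
    (ha2 : form a a = 2) (hb2 : form b b = 2) (hab : (5 : ℚ)⁻¹ • (a - b) ∈ A4dual) : a = b := by
  have hsmall : ∀ i, |((5 : ℚ)⁻¹ • (a - b)) i| < 1 / 2 := fun i => by
    have := (abs_sub (a i) (b i)).trans (add_le_add (abs_le_one_of_mem_A4 ha ha2 i)
      (abs_le_one_of_mem_A4 hb hb2 i))
    rw [Pi.smul_apply, Pi.sub_apply, smul_eq_mul, abs_mul, abs_of_pos (by norm_num)]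
    linarith
  have hsum : ∑ i, ((5 : ℚ)⁻¹ • (a - b)) i = 0 := by
    simp [← mul_sum, sum_sub_distrib, ha.2, hb.2]
  have := eq_zero_of_mem_integralDifferences (A4dual_le_integralDifferences hab) hsmall hsum
  simpa [sub_eq_zero] using this

lemma setOf_mem_A4_form_eq_two :
    {a | a ∈ A4 ∧ form a a = 2} =
      ((univ.offDiag.image fun p : Fin 5 × Fin 5 => rootVector p.1 p.2 : Finset _) : Set _) := by
  ext a
  simp only [Set.mem_ofPred_eq, mem_coe, mem_image, mem_offDiag, mem_univ, true_and,
    Prod.exists]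
  constructor
  · rintro ⟨ha, ha2⟩
    obtain ⟨i, j, hij, rfl⟩ := exists_eq_rootVector ha.1 ha.2 ha2
    exact ⟨i, j, hij, rfl⟩
  · rintro ⟨i, j, hij, rfl⟩
    exact ⟨⟨rootVector_apply_isInt i j, sum_rootVector i j⟩, sum_rootVector_mul_self hij⟩

lemma ncard_setOf_mem_A4_form_eq_two : {a | a ∈ A4 ∧ form a a = 2}.ncard = 20 := by
  rw [setOf_mem_A4_form_eq_two, Set.ncard_coe_finset, card_image_of_injOn rootVector_injOn_offDiag,
    offDiag_card]
  rfl

/-- Distinct vectors of norm `2/5` in the dual lattice of `A₄^∨(5)`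
are inequivalent modulo `A₄^∨`, and the vectors `a/5` with `a ∈ A₄`, `⟨a,a⟩ = 2`
represent exactly `20` distinct classes in the discriminant group. -/
theorem norm_two_fifths_classes :
    (∀ a b : Fin 5 → ℚ, a ∈ A4 → b ∈ A4 → form a a = 2 → form b b = 2 →
      (5 : ℚ)⁻¹ • (a - b) ∈ A4dual → a = b) ∧
    Set.ncard ((fun a : Fin 5 → ℚ =>
        (QuotientAddGroup.mk ((5 : ℚ)⁻¹ • a) : (Fin 5 → ℚ) ⧸ A4dual)) ''
      {a | a ∈ A4 ∧ form a a = 2}) = 20 := by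
  refine ⟨fun a b ha hb ha2 hb2 => eq_of_smul_sub_mem_A4dual ha hb ha2 hb2, ?_⟩
  have hinj : Set.InjOn (fun a : Fin 5 → ℚ =>
      (QuotientAddGroup.mk ((5 : ℚ)⁻¹ • a) : (Fin 5 → ℚ) ⧸ A4dual))
      {a | a ∈ A4 ∧ form a a = 2} := by
    rintro a ⟨ha, ha2⟩ b ⟨hb, hb2⟩ h
    refine (eq_of_smul_sub_mem_A4dual hb ha hb2 ha2 ?_).symm
    rw [smul_sub, sub_eq_neg_add]
    exact QuotientAddGroup.eq.1 h
  rw [hinj.ncard_image, ncard_setOf_mem_A4_form_eq_two]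
end
end

section
/- Any two distinct vectors of norm 4/5 in the dual lattice of A_4^∨(5) are inequivalent modulo A_4^∨: if a, b ∈ A_4 satisfy ⟨a,a⟩ = ⟨b,b⟩ = 4 and (a − b)/5 ∈ A_4^∨, then a = b. Consequently the vectors a/5 with a ∈ A_4, ⟨a,a⟩ = 4 represent exactly 30 distinct classes in D. -/
open scoped BigOperators

noncomputable section

/-!
A vector of norm 4 in `A₄` has entries in `{-1, 0, 1}`: an entry `±2` would leave no room for
any other nonzero entry, and the entries sum to zero. Every vector of `A₄^∨` has coordinates that
are pairwise congruent modulo `ℤ`, so if `(a - b)/5 ∈ A₄^∨` then the coordinates of `a - b`, which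
lie in `[-2, 2]`, are pairwise congruent modulo `5`, hence all equal; as they sum to zero, `a = b`.
So `a ↦ a/5 + A₄^∨` is injective on the norm-4 vectors, and there are `30` of them
(`5` choices of the zero entry times `6` placements of the two `-1`'s).
-/

open Finset

lemma abs_le_one_of_sum_eq_zero_of_sum_mul_self_eq_four {ι : Type*} [Fintype ι]
    {n : ι → ℤ} (hsum : ∑ i, n i = 0) (hnorm : ∑ i, n i * n i = 4) (i : ι) : |n i| ≤ 1 := by
  classical
  by_contra! hi
  have hsq : 4 ≤ n i * n i := by nlinarith [abs_mul_abs_self (n i)]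
  have hrest : ∀ j ∈ univ.erase i, n j * n j = 0 := by
    refine (sum_eq_zero_iff_of_nonneg fun j _ => mul_self_nonneg (n j)).mp ?_
    have := add_sum_erase univ (fun j => n j * n j) (mem_univ i)
    linarith [sum_nonneg fun j (_ : j ∈ univ.erase i) => mul_self_nonneg (n j)]
  have hni : n i = 0 := by
    rw [← add_sum_erase univ n (mem_univ i), sum_eq_zero fun j hj => mul_self_eq_zero.mp (hrest j hj),
      add_zero] at hsum
    exact hsum
  simp [hni] at hi

lemma eq_zero_of_dvd_sub_of_two_mul_abs_lt {ι : Type*} [Fintype ι] {N : ℤ} {d : ι → ℤ}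
    (hd : ∀ i, 2 * |d i| < N) (hdvd : ∀ i j, N ∣ d i - d j) (hsum : ∑ i, d i = 0) : d = 0 := by
  have hconst : ∀ i j, d i = d j := fun i j =>
    sub_eq_zero.mp <| Int.eq_zero_of_abs_lt_dvd (hdvd i j) <| by
      linarith [abs_sub (d i) (d j), hd i, hd j]
  funext i
  rw [sum_congr rfl fun j _ => hconst j i, sum_const, card_univ, nsmul_eq_mul] at hsum
  exact (mul_eq_zero.mp hsum).resolve_left (by exact_mod_cast (Fintype.card_pos_iff.mpr ⟨i⟩).ne')

def coordCongrSubgroup (ι : Type*) : AddSubgroup (ι → ℚ) where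
  carrier := {x | ∀ i j, ∃ m : ℤ, x i - x j = m}
  zero_mem' := fun _ _ => ⟨0, by simp⟩
  add_mem' := by
    rintro x y hx hy i j
    obtain ⟨m, hm⟩ := hx i j
    obtain ⟨n, hn⟩ := hy i j
    exact ⟨m + n, by push_cast [Pi.add_apply]; linarith⟩
  neg_mem' := by
    rintro x hx i j
    obtain ⟨m, hm⟩ := hx i j
    exact ⟨-m, by push_cast [Pi.neg_apply]; linarith⟩

lemma dvd_sub_of_inv_smul_intCast_mem_coordCongrSubgroup {ι : Type*} {N : ℤ} (hN : N ≠ 0)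
    {d : ι → ℤ} (h : (N : ℚ)⁻¹ • (Int.cast ∘ d) ∈ coordCongrSubgroup ι) (i j : ι) : N ∣ d i - d j := by
  obtain ⟨k, hk⟩ := h i j
  refine ⟨k, ?_⟩
  simp only [Pi.smul_apply, Function.comp_apply, smul_eq_mul] at hk
  have : ((d i - d j : ℤ) : ℚ) = ((N * k : ℤ) : ℚ) := by
    push_cast
    field_simp at hk
    linarith
  exact_mod_cast this

lemma A4dual_le_coordCongrSubgroup : A4dual ≤ coordCongrSubgroup (Fin 5) := by
  rw [A4dual, AddSubgroup.closure_le]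
  have hint : ∀ q : ℚ, (q = 0 ∨ q = 1 ∨ q = -1) → ∃ m : ℤ, q = m := by
    rintro q (rfl | rfl | rfl)
    exacts [⟨0, by norm_num⟩, ⟨1, by norm_num⟩, ⟨-1, by norm_num⟩]
  rintro w (rfl | rfl | rfl | rfl) <;>
    · intro i j
      apply hint
      fin_cases i <;> fin_cases j <;> norm_num [w1, w2, w3, w4]

lemma mem_A4_iff {a : Fin 5 → ℚ} :
    a ∈ A4 ↔ ∃ n : Fin 5 → ℤ, ∑ i, n i = 0 ∧ Int.cast ∘ n = a := by
  constructor
  · rintro ⟨hint, hsum⟩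
    choose n hn using hint
    refine ⟨n, ?_, funext fun i => (hn i).symm⟩
    exact_mod_cast (sum_congr rfl fun i _ => hn i).symm.trans hsum
  · rintro ⟨n, hsum, rfl⟩
    exact ⟨fun i => ⟨n i, rfl⟩, by simpa using congrArg (Int.cast : ℤ → ℚ) hsum⟩

lemma form_intCast_comp (n : Fin 5 → ℤ) :
    form (Int.cast ∘ n) (Int.cast ∘ n) = ((∑ i, n i * n i : ℤ) : ℚ) := by
  push_cast [form]
  rfl

def normFourVectors : Finset (Fin 5 → ℤ) :=
  (Fintype.piFinset fun _ => Icc (-1) 1).filter fun n => ∑ i, n i = 0 ∧ ∑ i, n i * n i = 4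

lemma normFourVectors_card : normFourVectors.card = 30 := by
  decide

lemma mem_normFourVectors_iff {n : Fin 5 → ℤ} :
    n ∈ normFourVectors ↔ ∑ i, n i = 0 ∧ ∑ i, n i * n i = 4 := by
  refine ⟨fun h => (mem_filter.mp h).2, fun h => mem_filter.mpr ⟨?_, h⟩⟩
  exact Fintype.mem_piFinset.mpr fun i =>
    mem_Icc.mpr (abs_le.mp (abs_le_one_of_sum_eq_zero_of_sum_mul_self_eq_four h.1 h.2 i))

lemma normFour_A4_eq_image :
    {a | a ∈ A4 ∧ form a a = 4} = (Int.cast ∘ ·) '' (normFourVectors : Set (Fin 5 → ℤ)) := by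
  ext a
  simp only [Set.mem_ofPred_eq, Set.mem_image, mem_coe, mem_normFourVectors_iff, mem_A4_iff]
  constructor
  · rintro ⟨⟨n, hsum, rfl⟩, hnorm⟩
    rw [form_intCast_comp] at hnorm
    exact ⟨n, ⟨hsum, by exact_mod_cast hnorm⟩, rfl⟩
  · rintro ⟨n, ⟨hsum, hnorm⟩, rfl⟩
    exact ⟨⟨n, hsum, rfl⟩, by rw [form_intCast_comp, hnorm]; norm_num⟩

lemma eq_of_normFour_of_smul_sub_mem_A4dual {a b : Fin 5 → ℚ} (ha : a ∈ A4) (hb : b ∈ A4)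
    (hna : form a a = 4) (hnb : form b b = 4) (hab : (5 : ℚ)⁻¹ • (a - b) ∈ A4dual) : a = b := by
  obtain ⟨n, hn, rfl⟩ : a ∈ (Int.cast ∘ ·) '' (normFourVectors : Set (Fin 5 → ℤ)) :=
    normFour_A4_eq_image ▸ ⟨ha, hna⟩
  obtain ⟨m, hm, rfl⟩ : b ∈ (Int.cast ∘ ·) '' (normFourVectors : Set (Fin 5 → ℤ)) :=
    normFour_A4_eq_image ▸ ⟨hb, hnb⟩
  rw [mem_coe, mem_normFourVectors_iff] at hn hm
  have hbound : ∀ i, |n i| ≤ 1 ∧ |m i| ≤ 1 := fun i =>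
    ⟨abs_le_one_of_sum_eq_zero_of_sum_mul_self_eq_four hn.1 hn.2 i,
      abs_le_one_of_sum_eq_zero_of_sum_mul_self_eq_four hm.1 hm.2 i⟩
  have hdvd := dvd_sub_of_inv_smul_intCast_mem_coordCongrSubgroup (N := 5) (d := n - m)
    (by norm_num) <| by
      rw [show (Int.cast ∘ (n - m) : Fin 5 → ℚ) = Int.cast ∘ n - Int.cast ∘ m from
        funext fun i => Int.cast_sub (n i) (m i)]
      exact A4dual_le_coordCongrSubgroup hab
  have hzero := eq_zero_of_dvd_sub_of_two_mul_abs_lt (N := 5) (d := n - m)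
    (fun i => by rw [Pi.sub_apply]; linarith [abs_sub (n i) (m i), (hbound i).1, (hbound i).2]) hdvd
    (by simp [sum_sub_distrib, hn.1, hm.1])
  rw [sub_eq_zero.mp hzero]

/-- Distinct vectors of norm `4/5` in the dual lattice of `A₄^∨(5)`
are inequivalent modulo `A₄^∨`, and the vectors `a/5` with `a ∈ A₄`, `⟨a,a⟩ = 4`
represent exactly `30` distinct classes in the discriminant group. -/
theorem norm_four_fifths_classes :
    (∀ a b : Fin 5 → ℚ, a ∈ A4 → b ∈ A4 → form a a = 4 → form b b = 4 →
      (5 : ℚ)⁻¹ • (a - b) ∈ A4dual → a = b) ∧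
    Set.ncard ((fun a : Fin 5 → ℚ =>
        (QuotientAddGroup.mk ((5 : ℚ)⁻¹ • a) : (Fin 5 → ℚ) ⧸ A4dual)) ''
      {a | a ∈ A4 ∧ form a a = 4}) = 30 := by
  refine ⟨fun a b => eq_of_normFour_of_smul_sub_mem_A4dual, ?_⟩
  have hinj : Set.InjOn (fun a : Fin 5 → ℚ =>
      (QuotientAddGroup.mk ((5 : ℚ)⁻¹ • a) : (Fin 5 → ℚ) ⧸ A4dual))
      {a | a ∈ A4 ∧ form a a = 4} := fun a ha b hb hab =>
    eq_of_normFour_of_smul_sub_mem_A4dual ha.1 hb.1 ha.2 hb.2 <| by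
      rw [smul_sub]
      exact QuotientAddGroup.eq_iff_sub_mem.mp hab
  rw [hinj.ncard_image, normFour_A4_eq_image,
    Set.ncard_image_of_injective _ Int.cast_injective.comp_left, Set.ncard_coe_finset,
    normFourVectors_card]
end
end

section
/- For any vector β of norm 2 in the dual lattice of A_4^∨(5), the lattice A_4^∨(5) + ℤβ is isomorphic to the root lattice A_4: for every b ∈ A_4 with ⟨b,b⟩ = 10 and β = b/5, there exists an additive group isomorphism φ from L = A_4^∨ + ℤβ onto A_4 such that ⟨φ(x), φ(y)⟩ = 5⟨x,y⟩ for all x, y ∈ L. -/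
open scoped BigOperators

noncomputable section

/-!
A norm-`10` vector of `A₄` has entries in `{-2, …, 2}` (Cauchy–Schwarz on the other four
coordinates), and a finite check shows that it is a coordinate permutation of
`b₀ = (2, -2, 1, -1, 0)`. Coordinate permutations preserve the form and `A₄^∨`, so it suffices to
treat `β₀ = b₀/5`. For it, an explicit integer matrix `T` with `TᵀT = 5I - J` multiplies the form
by `5` on `V`, sends the generators `w₁, …, w₄, β₀` of `A₄^∨ + ℤβ₀` into `A₄`, and hits each root
`eᵢ - e₀` of `A₄`. Positive definiteness of the form makes `T` injective on `V`.
-/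

open Finset

lemma eq_zero_of_form_self_eq_zero {x : Fin 5 → ℚ} (h : form x x = 0) : x = 0 :=
  funext fun i => (sum_mul_self_eq_zero_iff _ _).1 h i (mem_univ i)

theorem exists_addEquiv_form_eq_mul_of_map_eq {c : ℚ} (hc : c ≠ 0)
    (f : (Fin 5 → ℚ) →+ (Fin 5 → ℚ)) {L M : AddSubgroup (Fin 5 → ℚ)} (hLM : L.map f = M)
    (hf : ∀ x ∈ L, ∀ y ∈ L, form (f x) (f y) = c * form x y) :
    ∃ φ : L ≃+ M, ∀ x y : L, form (φ x : Fin 5 → ℚ) (φ y) = c * form (x : Fin 5 → ℚ) y := by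
  have hinj : Function.Injective (f.comp L.subtype) := by
    refine (injective_iff_map_eq_zero _).2 fun x hx => Subtype.ext ?_
    have hxx := hf x x.2 x x.2
    rw [show f x = 0 from hx] at hxx
    exact eq_zero_of_form_self_eq_zero <| by simpa [form, hc] using hxx.symm
  refine ⟨(AddMonoidHom.ofInjective hinj).trans (AddEquiv.addSubgroupCongr ?_),
    fun x y => hf x x.2 y y.2⟩
  rw [AddMonoidHom.range_comp, AddSubgroup.range_subtype, hLM]

lemma mem_A4_of_eq_intCast {x : Fin 5 → ℚ} (m : Fin 5 → ℤ) (hm : ∑ i, m i = 0)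
    (hx : ∀ i, x i = m i) : x ∈ A4 :=
  ⟨fun i => ⟨m i, hx i⟩, by simp only [hx, ← Int.cast_sum, hm, Int.cast_zero]⟩

lemma A4_le_of_single_sub_single_zero_mem {H : AddSubgroup (Fin 5 → ℚ)}
    (h : ∀ i, Pi.single i 1 - Pi.single 0 1 ∈ H) : A4 ≤ H := by
  rintro a ⟨ha, hsum⟩
  choose n hn using ha
  have hdecomp : a = ∑ i, n i • (Pi.single i 1 - Pi.single 0 1 : Fin 5 → ℚ) := by
    funext j
    simp [Finset.sum_apply, Pi.single_apply, ← hn, mul_sub, sum_sub_distrib, hsum]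
  rw [hdecomp]
  exact sum_mem fun i _ => zsmul_mem (h i) _

lemma zsmul_weights_mem_A4dual (c₁ c₂ c₃ c₄ : ℤ) :
    c₁ • w1 + c₂ • w2 + c₃ • w3 + c₄ • w4 ∈ A4dual := by
  have hw : ∀ w ∈ ({w1, w2, w3, w4} : Set (Fin 5 → ℚ)), w ∈ A4dual :=
    fun w hw => AddSubgroup.subset_closure hw
  exact add_mem (add_mem (add_mem (zsmul_mem (hw _ (by simp)) _) (zsmul_mem (hw _ (by simp)) _))
    (zsmul_mem (hw _ (by simp)) _)) (zsmul_mem (hw _ (by simp)) _)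

lemma A4_le_A4dual : A4 ≤ A4dual := by
  refine A4_le_of_single_sub_single_zero_mem fun i => ?_
  fin_cases i
  · simp
  · convert zsmul_weights_mem_A4dual (-2) 1 0 0 using 1
    funext j; fin_cases j <;> norm_num [w1, w2, w3, w4]
  · convert zsmul_weights_mem_A4dual (-1) (-1) 1 0 using 1
    funext j; fin_cases j <;> norm_num [w1, w2, w3, w4]
  · convert zsmul_weights_mem_A4dual (-1) 0 (-1) 1 using 1
    funext j; fin_cases j <;> norm_num [w1, w2, w3, w4]
  · convert zsmul_weights_mem_A4dual (-1) 0 0 (-1) using 1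
    funext j; fin_cases j <;> norm_num [w1, w2, w3, w4]

def permute (σ : Equiv.Perm (Fin 5)) : (Fin 5 → ℚ) →+ (Fin 5 → ℚ) :=
  AddMonoidHom.mk' (· ∘ σ) fun _ _ => rfl

lemma form_permute (σ : Equiv.Perm (Fin 5)) (x y : Fin 5 → ℚ) :
    form (permute σ x) (permute σ y) = form x y :=
  Equiv.sum_comp σ fun i => x i * y i

lemma sum_permute (σ : Equiv.Perm (Fin 5)) (x : Fin 5 → ℚ) : ∑ i, permute σ x i = ∑ i, x i :=
  Equiv.sum_comp σ x

lemma permute_sub_self_mem_A4 {w : Fin 5 → ℚ} (m : Fin 5 → ℤ) (c : ℚ) (hw : ∀ i, w i = m i - c)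
    (σ : Equiv.Perm (Fin 5)) : permute σ w - w ∈ A4 := by
  refine ⟨fun i => ⟨m (σ i) - m i, ?_⟩, ?_⟩
  · simp [permute, hw]
  · simp [sum_sub_distrib, sum_permute]

lemma map_permute_A4dual (σ : Equiv.Perm (Fin 5)) : A4dual.map (permute σ) = A4dual := by
  have hle : ∀ τ, A4dual.map (permute τ) ≤ A4dual := by
    intro τ
    rw [A4dual, AddMonoidHom.map_closure, AddSubgroup.closure_le]
    rintro _ ⟨w, hw, rfl⟩
    rw [← sub_add_cancel (permute τ w) w]
    refine add_mem (A4_le_A4dual ?_) (AddSubgroup.subset_closure hw)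
    -- `w_k` is `e₀ + ⋯ + e_{k-1}` minus the constant `k/5`
    simp only [Set.mem_insert_iff, Set.mem_singleton_iff] at hw
    rcases hw with rfl | rfl | rfl | rfl
    · exact permute_sub_self_mem_A4 ![1, 0, 0, 0, 0] (1 / 5)
        (fun i => by fin_cases i <;> norm_num [w1]) τ
    · exact permute_sub_self_mem_A4 ![1, 1, 0, 0, 0] (2 / 5)
        (fun i => by fin_cases i <;> norm_num [w2]) τ
    · exact permute_sub_self_mem_A4 ![1, 1, 1, 0, 0] (3 / 5)
        (fun i => by fin_cases i <;> norm_num [w3]) τ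
    · exact permute_sub_self_mem_A4 ![1, 1, 1, 1, 0] (4 / 5)
        (fun i => by fin_cases i <;> norm_num [w4]) τ
  refine (hle σ).antisymm fun x hx => ⟨permute σ⁻¹ x, hle σ⁻¹ ⟨x, hx, rfl⟩, ?_⟩
  funext i
  simp [permute]

lemma map_permute_sup_zmultiples (σ : Equiv.Perm (Fin 5)) (β : Fin 5 → ℚ) :
    (A4dual ⊔ AddSubgroup.zmultiples β).map (permute σ)
      = A4dual ⊔ AddSubgroup.zmultiples (permute σ β) := by
  rw [AddSubgroup.map_sup, map_permute_A4dual, AddMonoidHom.map_zmultiples]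

lemma A4dual_le_V0 : A4dual ≤ V0.toAddSubgroup := by
  rw [A4dual, AddSubgroup.closure_le]
  rintro w hw
  simp only [Set.mem_insert_iff, Set.mem_singleton_iff] at hw
  rcases hw with rfl | rfl | rfl | rfl <;>
    simp [V0, w1, w2, w3, w4, Fin.sum_univ_five] <;> norm_num

lemma sum_eq_zero_of_mem_sup_zmultiples {β x : Fin 5 → ℚ} (hβ : ∑ i, β i = 0)
    (hx : x ∈ A4dual ⊔ AddSubgroup.zmultiples β) : ∑ i, x i = 0 :=
  sup_le A4dual_le_V0 (AddSubgroup.zmultiples_le.2 hβ) hx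

def b0 : Fin 5 → ℤ := ![2, -2, 1, -1, 0]

lemma abs_le_two_of_sum_eq_zero_of_sum_sq_eq_ten {n : Fin 5 → ℤ} (hsum : ∑ i, n i = 0)
    (hsq : ∑ i, n i ^ 2 = 10) (i : Fin 5) : |n i| ≤ 2 := by
  rw [← add_sum_erase _ _ (mem_univ i)] at hsum hsq
  have hcs := sq_sum_le_card_mul_sum_sq (s := univ.erase i) (f := n)
  rw [card_erase_of_mem (mem_univ i), card_univ, Fintype.card_fin] at hcs
  push_cast at hcs
  exact abs_le.2 ⟨by nlinarith, by nlinarith⟩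

set_option maxRecDepth 10000 in
lemma exists_perm_eq_b0_of_sum_sq {n : Fin 5 → ℤ} (hsum : ∑ i, n i = 0)
    (hsq : ∑ i, n i ^ 2 = 10) : ∃ σ : Equiv.Perm (Fin 5), ∀ i, n i = b0 (σ i) := by
  have hshift : ∀ i, ∃ a : Fin 5, n i = (a : ℤ) - 2 := fun i => by
    have := abs_le.1 (abs_le_two_of_sum_eq_zero_of_sum_sq_eq_ten hsum hsq i)
    exact ⟨⟨(n i + 2).toNat, by omega⟩, by simp; omega⟩
  choose a ha using hshift
  have hcheck : ∀ a₀ a₁ a₂ a₃ a₄ : Fin 5,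
      ((a₀ : ℤ) - 2) + ((a₁ : ℤ) - 2) + ((a₂ : ℤ) - 2) + ((a₃ : ℤ) - 2) + ((a₄ : ℤ) - 2) = 0 →
      ((a₀ : ℤ) - 2) ^ 2 + ((a₁ : ℤ) - 2) ^ 2 + ((a₂ : ℤ) - 2) ^ 2 + ((a₃ : ℤ) - 2) ^ 2
        + ((a₄ : ℤ) - 2) ^ 2 = 10 →
      ∃ σ : Equiv.Perm (Fin 5), (a₀ : ℤ) - 2 = b0 (σ 0) ∧ (a₁ : ℤ) - 2 = b0 (σ 1) ∧
        (a₂ : ℤ) - 2 = b0 (σ 2) ∧ (a₃ : ℤ) - 2 = b0 (σ 3) ∧ (a₄ : ℤ) - 2 = b0 (σ 4) := by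
    decide
  simp only [Fin.sum_univ_five, ha] at hsum hsq
  obtain ⟨σ, h₀, h₁, h₂, h₃, h₄⟩ := hcheck _ _ _ _ _ hsum hsq
  refine ⟨σ, fun i => ?_⟩
  fin_cases i <;> simp [*]

lemma exists_perm_eq_b0 {b : Fin 5 → ℚ} (hb : b ∈ A4) (hbb : form b b = 10) :
    ∃ σ : Equiv.Perm (Fin 5), ∀ i, b i = b0 (σ i) := by
  obtain ⟨hint, hsum⟩ := hb
  choose n hn using hint
  have hsumℤ : ∑ i, n i = 0 := by exact_mod_cast (by simpa [hn] using hsum : ∑ i, (n i : ℚ) = 0)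
  have hsqℤ : ∑ i, n i ^ 2 = 10 := by
    exact_mod_cast (by simpa [form, hn, sq] using hbb : ∑ i, (n i : ℚ) ^ 2 = 10)
  obtain ⟨σ, hσ⟩ := exists_perm_eq_b0_of_sum_sq hsumℤ hsqℤ
  exact ⟨σ, fun i => by rw [hn, hσ]⟩

def similitude : (Fin 5 → ℚ) →+ (Fin 5 → ℚ) :=
  AddMonoidHom.mk'
    (fun x => ![-x 0 + x 2 - x 3 + x 4, -x 1 - x 2 + x 3 + x 4, x 0 + x 1 - x 2 - x 3,
      -x 0 + x 1 + x 3 - x 4, x 0 - x 1 + x 2 - x 4])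
    fun x y => by funext i; fin_cases i <;> (simp; ring)

lemma form_similitude (x y : Fin 5 → ℚ) :
    form (similitude x) (similitude y) = 5 * form x y - (∑ i, x i) * ∑ i, y i := by
  simp only [form, similitude, AddMonoidHom.mk'_apply, Fin.sum_univ_five, Matrix.cons_val]
  ring

def beta0 : Fin 5 → ℚ := fun i => (b0 i : ℚ) / 5

lemma similitude_w1 : similitude w1 = fun j => ((![-1, 0, 1, -1, 1] : Fin 5 → ℤ) j : ℚ) := by
  funext j; fin_cases j <;> simp [similitude, w1] <;> norm_num

lemma similitude_w2 : similitude w2 = fun j => ((![-1, -1, 2, 0, 0] : Fin 5 → ℤ) j : ℚ) := by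
  funext j; fin_cases j <;> simp [similitude, w2] <;> norm_num

lemma similitude_w3 : similitude w3 = fun j => ((![0, -2, 1, 0, 1] : Fin 5 → ℤ) j : ℚ) := by
  funext j; fin_cases j <;> simp [similitude, w3] <;> norm_num

lemma similitude_w4 : similitude w4 = fun j => ((![-1, -1, 0, 1, 1] : Fin 5 → ℤ) j : ℚ) := by
  funext j; fin_cases j <;> simp [similitude, w4] <;> norm_num

lemma similitude_beta0 : similitude beta0 = fun j => ((![0, 0, 0, -1, 1] : Fin 5 → ℤ) j : ℚ) := by
  funext j; fin_cases j <;> simp [similitude, beta0, b0] <;> norm_num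

lemma map_similitude_sup_zmultiples_le :
    (A4dual ⊔ AddSubgroup.zmultiples beta0).map similitude ≤ A4 := by
  rw [AddSubgroup.map_sup, AddMonoidHom.map_zmultiples, A4dual, AddMonoidHom.map_closure,
    sup_le_iff, AddSubgroup.closure_le, AddSubgroup.zmultiples_le]
  refine ⟨?_, similitude_beta0 ▸ mem_A4_of_eq_intCast _ (by decide) fun _ => rfl⟩
  rintro _ ⟨w, hw, rfl⟩
  simp only [Set.mem_insert_iff, Set.mem_singleton_iff] at hw
  rcases hw with rfl | rfl | rfl | rfl
  · exact similitude_w1 ▸ mem_A4_of_eq_intCast _ (by decide) fun _ => rfl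
  · exact similitude_w2 ▸ mem_A4_of_eq_intCast _ (by decide) fun _ => rfl
  · exact similitude_w3 ▸ mem_A4_of_eq_intCast _ (by decide) fun _ => rfl
  · exact similitude_w4 ▸ mem_A4_of_eq_intCast _ (by decide) fun _ => rfl

lemma A4_le_map_similitude_sup_zmultiples :
    A4 ≤ (A4dual ⊔ AddSubgroup.zmultiples beta0).map similitude := by
  have hmem : ∀ (c₁ c₂ c₃ c₄ m : ℤ), similitude (c₁ • w1 + c₂ • w2 + c₃ • w3 + c₄ • w4 + m • beta0)
      ∈ (A4dual ⊔ AddSubgroup.zmultiples beta0).map similitude := fun c₁ c₂ c₃ c₄ m =>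
    AddSubgroup.mem_map_of_mem _ <|
      add_mem (AddSubgroup.mem_sup_left (zsmul_weights_mem_A4dual c₁ c₂ c₃ c₄))
        (AddSubgroup.mem_sup_right (zsmul_mem (AddSubgroup.mem_zmultiples beta0) m))
  simp only [map_add, map_zsmul, similitude_w1, similitude_w2, similitude_w3, similitude_w4,
    similitude_beta0] at hmem
  refine A4_le_of_single_sub_single_zero_mem fun i => ?_
  fin_cases i
  · simp
  · convert hmem 2 (-1) 0 0 (-2) using 1
    funext j; fin_cases j <;> norm_num
  · convert hmem 1 0 0 0 (-1) using 1
    funext j; fin_cases j <;> norm_num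
  · convert hmem (-1) 1 (-1) 1 1 using 1
    funext j; fin_cases j <;> norm_num
  · convert hmem (-1) 1 (-1) 1 2 using 1
    funext j; fin_cases j <;> norm_num

/-- For any vector `β = b/5` of norm `2` in the dual lattice of
`A₄^∨(5)` (i.e. `b ∈ A₄` with `⟨b,b⟩ = 10`), the lattice `A₄^∨(5) + ℤβ` is isomorphic
to the root lattice `A₄`: there is a group isomorphism `φ` onto `A₄` with
`⟨φ(x),φ(y)⟩ = 5⟨x,y⟩`. -/
theorem A4dual5_plus_beta_iso_A4 :
    ∀ b : Fin 5 → ℚ, b ∈ A4 → form b b = 10 →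
      ∃ φ : (A4dual ⊔ AddSubgroup.zmultiples ((5 : ℚ)⁻¹ • b) : AddSubgroup (Fin 5 → ℚ)) ≃+ A4,
        ∀ x y : (A4dual ⊔ AddSubgroup.zmultiples ((5 : ℚ)⁻¹ • b) : AddSubgroup (Fin 5 → ℚ)),
          form (φ x : Fin 5 → ℚ) (φ y : Fin 5 → ℚ)
            = 5 * form (x : Fin 5 → ℚ) (y : Fin 5 → ℚ) := by
  intro b hb hbb
  obtain ⟨σ, hσ⟩ := exists_perm_eq_b0 hb hbb
  have hβ : permute σ⁻¹ ((5 : ℚ)⁻¹ • b) = beta0 := by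
    funext i
    simp [permute, beta0, hσ, div_eq_inv_mul]
  have hβsum : ∑ i, ((5 : ℚ)⁻¹ • b) i = 0 := by
    simp [← mul_sum, hb.2]
  refine exists_addEquiv_form_eq_mul_of_map_eq (by norm_num) (similitude.comp (permute σ⁻¹)) ?_ ?_
  · rw [← AddSubgroup.map_map, map_permute_sup_zmultiples, hβ]
    exact map_similitude_sup_zmultiples_le.antisymm A4_le_map_similitude_sup_zmultiples
  · intro x hx y _
    rw [AddMonoidHom.comp_apply, AddMonoidHom.comp_apply, form_similitude, form_permute,
      sum_permute, sum_permute, sum_eq_zero_of_mem_sup_zmultiples hβsum hx, zero_mul, sub_zero]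
end
end

section
/- O(A_4) = W(A_4) ⋊ C_2: every additive group automorphism g of A_4 satisfying ⟨g(a), g(b)⟩ = ⟨a,b⟩ for all a, b ∈ A_4 is of the form a ↦ ε·(a_{σ(1)}, a_{σ(2)}, a_{σ(3)}, a_{σ(4)}, a_{σ(5)}) for a unique pair (σ, ε) with σ a permutation of {1,…,5} and ε ∈ {+1, −1}; in particular the integral orthogonal group O(A_4) is isomorphic to S_5 × ℤ/2ℤ, where the coordinate permutations form the Weyl group W(A_4) and C_2 is generated by a ↦ −a. -/
open scoped BigOperators

noncomputable section

/-- The multiplicative group structure that `AddAut A` carried in the older Mathlib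
(`g * h = h.trans g`, `1 = refl`, `g⁻¹ = g.symm`); Mathlib now makes `AddAut A` an additive group. -/
instance AddAut.oldMulGroup (A : Type*) [Add A] : Group (AddAut A) where
  mul g h := AddEquiv.trans h g
  one := AddEquiv.refl A
  inv := AddEquiv.symm
  mul_assoc _ _ _ := rfl
  one_mul _ := rfl
  mul_one _ := rfl
  inv_mul_cancel := AddEquiv.self_trans_symm

/-- The integral orthogonal group `O(A₄)`: the group of additive automorphisms of the
root lattice `A₄` preserving the bilinear form `⟨·,·⟩`. -/
def OA4 : Subgroup (AddAut A4) where
  carrier := {g | ∀ a b : A4,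
    form (g a : Fin 5 → ℚ) (g b : Fin 5 → ℚ) = form (a : Fin 5 → ℚ) (b : Fin 5 → ℚ)}
  one_mem' := fun _ _ => rfl
  mul_mem' := by
    intro g h hg hh a b
    exact (hg (h a) (h b)).trans (hh a b)
  inv_mem' := by
    intro g hg a b
    show form (g.symm a : Fin 5 → ℚ) (g.symm b : Fin 5 → ℚ) = _
    have h1 := hg (g.symm a) (g.symm b)
    simpa using h1.symm

/-!
An isometry of `A₄` sends roots (the norm-2 vectors `eᵢ - eⱼ`) to roots. The roots `eᵢ - e₅`
(`i ≤ 4`) have pairwise inner product `1`, and two roots `e_a - e_b`, `e_c - e_d` have inner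
product `1` exactly when they share their head or their tail, but not both. Hence the images
`e_{A i} - e_{B i}` of these roots either all have the same tail, and the isometry is a
coordinate permutation, or all have the same head, and it is minus such a permutation. As these
roots generate `A₄`, this determines the isometry; the image of a single root `e_{σ k} - e_z`
pins down both the permutation and the sign.
-/

open Finset Matrix

theorem forall_eq_or_forall_eq_of_eq_iff_ne {κ ι : Type*} {A B : κ → ι}
    (h : ∀ k l, k ≠ l → (A k = A l ↔ B k ≠ B l)) : (∀ k l, A k = A l) ∨ (∀ k l, B k = B l) := by
  have hB : ∀ k l, A k ≠ A l → B k = B l := fun k l hA =>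
    not_not.1 fun hB => hA ((h k l (ne_of_apply_ne A hA)).2 hB)
  have hA : ∀ k l, B k ≠ B l → A k = A l := fun k l hB =>
    (h k l (ne_of_apply_ne B hB)).2 hB
  by_contra! ⟨⟨k, l, hkl⟩, ⟨m, n, hmn⟩⟩
  by_cases hkm : A k = A m
  · exact hmn ((hB l m (by grind)).symm.trans (hB l n (by grind [hA m n hmn])))
  · exact hmn ((hB k m hkm).symm.trans (hB k n (by grind [hA m n hmn])))

theorem Int.cast_units_mul_self {R : Type*} [Ring R] (ε : ℤˣ) : ((ε : ℤ) : R) * ε = 1 := by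
  rw [← Int.cast_mul, ← Units.val_mul, Int.units_mul_self, Units.val_one, Int.cast_one]

section Roots

variable {ι : Type*} [Fintype ι] [DecidableEq ι]

theorem exists_eq_single_sub_single_of_dotProduct_self_eq_two {n : ι → ℤ}
    (hsum : ∑ i, n i = 0) (hnorm : n ⬝ᵥ n = 2) :
    ∃ i j, i ≠ j ∧ n = Pi.single i 1 - Pi.single j 1 := by
  have hbound : ∀ i, n i = -1 ∨ n i = 0 ∨ n i = 1 := by
    intro i
    have : n i * n i ≤ 2 :=
      hnorm ▸ single_le_sum (f := fun j => n j * n j) (fun j _ => mul_self_nonneg (n j))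
        (mem_univ i)
    have : -1 ≤ n i ∧ n i ≤ 1 := by constructor <;> nlinarith
    omega
  -- `n i * n i + s * n i` is `2` where `n i = s` and `0` elsewhere.
  have hcard : ∀ s : ℤ, s = 1 ∨ s = -1 → ∃ i, ∀ k, n k = s ↔ k = i := by
    intro s hs
    have key : ∑ i, (n i * n i + s * n i) = 2 * #{i | n i = s} := by
      rw [card_filter, Nat.cast_sum, mul_sum]
      refine sum_congr rfl fun i _ => ?_
      rcases hs with rfl | rfl <;> rcases hbound i with h | h | h <;> simp [h]
    rw [sum_add_distrib, ← mul_sum, hsum, ← dotProduct, hnorm] at key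
    obtain ⟨i, hi⟩ := card_eq_one.1 (show #{i | n i = s} = 1 by omega)
    exact ⟨i, fun k => by simpa using congrArg (k ∈ ·) hi⟩
  obtain ⟨i, hi⟩ := hcard 1 (.inl rfl)
  obtain ⟨j, hj⟩ := hcard (-1) (.inr rfl)
  have hij : i ≠ j := by
    rintro rfl
    have := ((hi i).2 rfl).symm.trans ((hj i).2 rfl)
    norm_num at this
  refine ⟨i, j, hij, funext fun k => ?_⟩
  simp only [Pi.sub_apply, Pi.single_apply]
  rcases hbound k with h | h | h
  · obtain rfl := (hj k).1 h
    simp [h, hij.symm]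
  · have hki : k ≠ i := fun hk => by simpa [h] using (hi k).2 hk
    have hkj : k ≠ j := fun hk => by simpa [h] using (hj k).2 hk
    simp [h, hki, hkj]
  · obtain rfl := (hi k).1 h
    simp [h, hij]

theorem single_sub_single_dotProduct {R : Type*} [Ring R] (a b c d : ι) :
    (Pi.single a 1 - Pi.single b 1 : ι → R) ⬝ᵥ (Pi.single c 1 - Pi.single d 1) =
      (if a = c then 1 else 0) + (if b = d then 1 else 0)
        - (if a = d then 1 else 0) - (if b = c then 1 else 0) := by
  simp only [sub_dotProduct, dotProduct_sub, single_dotProduct, Pi.single_apply, one_mul]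
  abel

theorem eq_iff_ne_of_single_sub_single_dotProduct_eq_one {a b c d : ι} (hcd : c ≠ d)
    (h : (Pi.single a 1 - Pi.single b 1 : ι → ℚ) ⬝ᵥ (Pi.single c 1 - Pi.single d 1) = 1) :
    a = c ↔ b ≠ d := by
  rw [single_sub_single_dotProduct] at h
  split_ifs at h <;> norm_num at h <;> grind

end Roots

namespace A4

theorem mem_iff_exists_int {a : Fin 5 → ℚ} :
    a ∈ A4 ↔ ∃ n : Fin 5 → ℤ, ∑ i, n i = 0 ∧ a = fun i => (n i : ℚ) := by
  constructor
  · rintro ⟨hint, hsum⟩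
    choose n hn using hint
    refine ⟨n, ?_, funext hn⟩
    exact_mod_cast (sum_congr rfl fun i _ => (hn i).symm).trans hsum
  · rintro ⟨n, hsum, rfl⟩
    exact ⟨fun i => ⟨n i, rfl⟩, by simpa using congrArg ((↑) : ℤ → ℚ) hsum⟩

def root (i j : Fin 5) : A4 :=
  ⟨Pi.single i 1 - Pi.single j 1, mem_iff_exists_int.2
    ⟨Pi.single i 1 - Pi.single j 1, by simp [sum_sub_distrib], by
      ext k; simp [Pi.single_apply]⟩⟩

@[simp]
theorem coe_root (i j : Fin 5) : (root i j : Fin 5 → ℚ) = Pi.single i 1 - Pi.single j 1 := rfl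

theorem exists_eq_root_of_form_self_eq_two {a : A4} (ha : form a a = 2) :
    ∃ i j, i ≠ j ∧ a = root i j := by
  obtain ⟨n, hsum, hn⟩ := mem_iff_exists_int.1 a.2
  have hnorm : n ⬝ᵥ n = 2 := by
    have : ((n ⬝ᵥ n : ℤ) : ℚ) = 2 := by simpa [form, dotProduct, hn] using ha
    exact_mod_cast this
  obtain ⟨i, j, hij, rfl⟩ := exists_eq_single_sub_single_of_dotProduct_self_eq_two hsum hnorm
  refine ⟨i, j, hij, Subtype.ext ?_⟩
  rw [hn]
  ext k; simp [Pi.single_apply]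

theorem eq_sum_zsmul_root {a : A4} {n : Fin 5 → ℤ} (hn : (a : Fin 5 → ℚ) = fun i => (n i : ℚ)) :
    a = ∑ i, n i • root i 4 := by
  have hsum : ∑ i, (n i : ℚ) = 0 := hn ▸ a.2.2
  ext k
  simp [hn, Pi.single_apply, sub_eq_add_neg, sum_add_distrib, hsum]

theorem addMonoidHom_ext {M : Type*} [AddCommGroup M] {f g : A4 →+ M}
    (h : ∀ i, f (root i 4) = g (root i 4)) : f = g := by
  ext a
  obtain ⟨n, -, hn⟩ := mem_iff_exists_int.1 a.2
  simp [eq_sum_zsmul_root hn, h]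

variable (σ : Equiv.Perm (Fin 5)) (ε : ℤˣ)

theorem signedPerm_mem {a : Fin 5 → ℚ} (ha : a ∈ A4) :
    (fun i => ((ε : ℤ) : ℚ) * a (σ i)) ∈ A4 := by
  obtain ⟨n, hsum, rfl⟩ := mem_iff_exists_int.1 ha
  refine mem_iff_exists_int.2 ⟨fun i => ε * n (σ i), ?_, by simp⟩
  rw [← mul_sum, Equiv.sum_comp σ n, hsum, mul_zero]

def signedPerm : AddAut A4 where
  toFun a := ⟨_, signedPerm_mem σ ε a.2⟩
  invFun a := ⟨_, signedPerm_mem σ⁻¹ ε a.2⟩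
  left_inv a := by ext i; simp [← mul_assoc, Int.cast_units_mul_self]
  right_inv a := by ext i; simp [← mul_assoc, Int.cast_units_mul_self]
  map_add' a b := by ext i; simp [mul_add]

theorem coe_signedPerm_apply (a : A4) :
    (signedPerm σ ε a : Fin 5 → ℚ) = fun i => ((ε : ℤ) : ℚ) * (a : Fin 5 → ℚ) (σ i) := rfl

theorem signedPerm_root (i j : Fin 5) :
    (signedPerm σ ε (root i j) : Fin 5 → ℚ) =
      ((ε : ℤ) : ℚ) • (Pi.single (σ⁻¹ i) 1 - Pi.single (σ⁻¹ j) 1) := by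
  ext k
  simp [coe_signedPerm_apply, Pi.single_apply, Equiv.eq_symm_apply]

theorem signedPerm_mem_OA4 : signedPerm σ ε ∈ OA4 := fun a b => by
  simp only [form, coe_signedPerm_apply]
  simp_rw [mul_mul_mul_comm _ ((a : Fin 5 → ℚ) _), Int.cast_units_mul_self, one_mul]
  exact Equiv.sum_comp σ fun i => (a : Fin 5 → ℚ) i * (b : Fin 5 → ℚ) i

theorem signedPerm_mul (τ : Equiv.Perm (Fin 5)) (δ : ℤˣ) :
    signedPerm σ ε * signedPerm τ δ = signedPerm (τ * σ) (ε * δ) := by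
  ext a i
  change ((ε : ℤ) : ℚ) * (((δ : ℤ) : ℚ) * _) = _
  simp [coe_signedPerm_apply, mul_assoc]

theorem signedPerm_injective :
    Function.Injective fun p : Equiv.Perm (Fin 5) × ℤˣ => signedPerm p.1 p.2 := by
  rintro ⟨σ, ε⟩ ⟨σ', ε'⟩ h
  have hval : ∀ k, σ' k = σ k ∧ ((ε : ℤ) : ℚ) = ε' := fun k => by
    obtain ⟨z, hzσ, hzσ'⟩ : ∃ z, z ≠ σ k ∧ z ≠ σ' k := by
      have : ∀ x y : Fin 5, ∃ z, z ≠ x ∧ z ≠ y := by decide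
      exact this _ _
    have := congrFun (congrArg (fun g : AddAut A4 => (g (root (σ k) z) : Fin 5 → ℚ)) h) k
    simp only [coe_signedPerm_apply, coe_root, Pi.sub_apply, Pi.single_apply,
      if_neg hzσ.symm, if_neg hzσ'.symm] at this
    by_cases hk : σ' k = σ k <;> simp_all
  simp only [Prod.mk.injEq]
  exact ⟨Equiv.ext fun k => (hval k).1.symm, Units.ext (by exact_mod_cast (hval 0).2)⟩

theorem exists_eq_signedPerm_of_map_root {g : AddAut A4} {A : Fin 4 → Fin 5} {t : Fin 5}
    (hA : Function.Injective A) (ht : t ∉ Set.range A)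
    (hg : ∀ i, (g (root i.castSucc 4) : Fin 5 → ℚ) =
      ((ε : ℤ) : ℚ) • (Pi.single (A i) 1 - Pi.single t 1)) :
    ∃ σ, g = signedPerm σ ε := by
  let τ : Equiv.Perm (Fin 5) := Equiv.ofBijective (Fin.snoc A t)
    (Finite.injective_iff_bijective.1 (Fin.snoc_injective_of_injective hA ht))
  have hτ : ∀ i, τ i.castSucc = A i := Fin.snoc_castSucc (α := fun _ => Fin 5) t A
  have hτ4 : τ 4 = t := Fin.snoc_last (α := fun _ => Fin 5) t A
  refine ⟨τ⁻¹, AddEquiv.toAddMonoidHom_injective (addMonoidHom_ext fun i => Subtype.ext ?_)⟩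
  change (g (root i 4) : Fin 5 → ℚ) = signedPerm τ⁻¹ ε (root i 4)
  rw [signedPerm_root, inv_inv]
  induction i using Fin.lastCases with
  | last => simp [root]
  | cast i => rw [hg i, hτ, hτ4]

theorem exists_eq_signedPerm {g : AddAut A4} (hg : g ∈ OA4) :
    ∃ p : Equiv.Perm (Fin 5) × ℤˣ, g = signedPerm p.1 p.2 := by
  have h4 : ∀ i : Fin 4, i.castSucc ≠ 4 := Fin.castSucc_ne_last
  have hroot : ∀ i : Fin 4, ∃ x y, x ≠ y ∧ g (root i.castSucc 4) = root x y :=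
    fun i => exists_eq_root_of_form_self_eq_two <| (hg _ _).trans <|
      (single_sub_single_dotProduct _ _ _ _).trans <| by norm_num [h4, (h4 _).symm]
  choose A B hAB hgroot using hroot
  have hxor : ∀ i j, i ≠ j → (A i = A j ↔ B i ≠ B j) := fun i j hij =>
    eq_iff_ne_of_single_sub_single_dotProduct_eq_one (hAB j) <| by
      rw [← coe_root, ← coe_root, ← hgroot, ← hgroot]
      exact (hg _ _).trans <| (single_sub_single_dotProduct _ _ _ _).trans <| by
        simp [h4, (h4 _).symm, hij]
  rcases forall_eq_or_forall_eq_of_eq_iff_ne hxor with hA | hB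
  · have hBinj : Function.Injective B := fun i j h => by
      by_contra hij
      exact (hxor i j hij).1 (hA i j) h
    obtain ⟨σ, hσ⟩ := exists_eq_signedPerm_of_map_root (-1) hBinj (t := A 0)
      (fun ⟨i, hi⟩ => hAB i (hA i 0 |>.trans hi.symm))
      (fun i => by rw [hgroot, coe_root, hA i 0]; simp)
    exact ⟨(σ, -1), hσ⟩
  · have hAinj : Function.Injective A := fun i j h => by
      by_contra hij
      exact (hxor i j hij).1 h (hB i j)
    obtain ⟨σ, hσ⟩ := exists_eq_signedPerm_of_map_root 1 hAinj (t := B 0)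
      (fun ⟨i, hi⟩ => hAB i (hi.trans (hB i 0).symm))
      (fun i => by rw [hgroot, coe_root, hB i 0]; simp)
    exact ⟨(σ, 1), hσ⟩

-- `signedPerm` reverses products in `σ` (`signedPerm_mul`), hence the inverse.
def signedPermHom : Equiv.Perm (Fin 5) × ℤˣ →* OA4 where
  toFun p := ⟨signedPerm p.1⁻¹ p.2, signedPerm_mem_OA4 _ _⟩
  map_one' := Subtype.ext <| by ext a i; simp [coe_signedPerm_apply]; rfl
  map_mul' p q := Subtype.ext <| by simp [signedPerm_mul]

theorem signedPermHom_bijective : Function.Bijective signedPermHom := by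
  refine ⟨fun p q h => ?_, fun ⟨g, hg⟩ => ?_⟩
  · have := signedPerm_injective (a₁ := (p.1⁻¹, p.2)) (a₂ := (q.1⁻¹, q.2))
      (congrArg Subtype.val h)
    simp_all [Prod.ext_iff]
  · obtain ⟨⟨σ, ε⟩, rfl⟩ := exists_eq_signedPerm hg
    exact ⟨(σ⁻¹, ε), by simp [signedPermHom]⟩

end A4

def intUnitsMulEquiv : ℤˣ ≃* Multiplicative (ZMod 2) :=
  mulEquivOfPrimeCardEq (p := 2) (by simp) (by simp)

/-- `O(A₄) = W(A₄) ⋊ C₂`: every isometry of the root lattice `A₄` is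
`a ↦ ε·(a_{σ(1)},…,a_{σ(5)})` for a unique pair `(σ,ε)` with `σ ∈ S₅`, `ε = ±1`;
in particular `O(A₄) ≅ S₅ × ℤ/2ℤ`. -/
theorem O_A4_structure :
    (∀ g : AddAut A4,
      (∀ a b : A4, form (g a : Fin 5 → ℚ) (g b : Fin 5 → ℚ)
          = form (a : Fin 5 → ℚ) (b : Fin 5 → ℚ)) →
      ∃! p : Equiv.Perm (Fin 5) × ℤˣ,
        ∀ a : A4, (g a : Fin 5 → ℚ) = fun i => ((p.2 : ℤ) : ℚ) * (a : Fin 5 → ℚ) (p.1 i)) ∧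
    Nonempty (OA4 ≃* Equiv.Perm (Fin 5) × Multiplicative (ZMod 2)) := by
  refine ⟨fun g hg => ?_, ⟨(MulEquiv.ofBijective _ A4.signedPermHom_bijective).symm.trans
    (MulEquiv.prodCongr (MulEquiv.refl _) intUnitsMulEquiv)⟩⟩
  obtain ⟨p, rfl⟩ := A4.exists_eq_signedPerm hg
  exact ⟨p, fun a => rfl, fun q hq => A4.signedPerm_injective <|
    AddEquiv.ext fun a => Subtype.ext (hq a).symm⟩
end
end

section
/- The orthogonal group O(A_4^∨(5)) acts transitively on the classes of the same norm in the standard representative system of D: for every m ∈ {2, 4, 6, 8, 10} and all a, b ∈ A_4 with ⟨a,a⟩ = ⟨b,b⟩ = m, there exist a permutation σ of {1,…,5} and ε ∈ {+1, −1} such that ε·(a_{σ(1)}, a_{σ(2)}, a_{σ(3)}, a_{σ(4)}, a_{σ(5)}) − b ∈ 5·A_4^∨, i.e. the isometry a ↦ ε·σ(a) of A_4 sends the class of a/5 in D to the class of b/5. -/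
open scoped BigOperators

noncomputable section

/-!
An integer vector `k` with `∑ kᵢ = 0` lies in `5·A₄^∨` as soon as all its coordinates are
congruent mod 5, so it suffices to show that two vectors of `A₄` of the same norm
`m ≤ 10` become coordinatewise congruent mod 5, up to a common shift, after a signed
permutation. Entries of such vectors lie in `[-3, 3]`, and sorting them leaves eight
vectors up to the order of coordinates; the norms `2, 4, 10` carry one of them each, the
norm `6` two that differ by a sign, and the norm `8` three, which become congruent after
a sign change and a shift by `±1`.
-/

theorem intVec_div_five_mem_A4dual (k : Fin 5 → ℤ) (hsum : ∑ i, k i = 0)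
    (hconst : ∀ i, (k i : ZMod 5) = k 0) : (fun i => (k i : ℚ) / 5) ∈ A4dual := by
  have hdvd : ∀ i j, (5 : ℤ) ∣ k i - k j := fun i j =>
    (ZMod.intCast_eq_intCast_iff_dvd_sub _ _ 5).1 (by rw [hconst i, hconst j])
  obtain ⟨c₁, hc₁⟩ := hdvd 0 1
  obtain ⟨c₂, hc₂⟩ := hdvd 1 2
  obtain ⟨c₃, hc₃⟩ := hdvd 2 3
  obtain ⟨c₄, hc₄⟩ := hdvd 3 4
  have hw : ∀ w ∈ ({w1, w2, w3, w4} : Set (Fin 5 → ℚ)), w ∈ A4dual :=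
    fun _ hw => AddSubgroup.subset_closure hw
  -- a vector `x` of `V` is `∑ⱼ (xⱼ₋₁ - xⱼ) wⱼ`
  have hexpand : (fun i => (k i : ℚ) / 5) = c₁ • w1 + c₂ • w2 + c₃ • w3 + c₄ • w4 := by
    rw [Fin.sum_univ_five] at hsum
    have hsumℚ : (k 0 : ℚ) + k 1 + k 2 + k 3 + k 4 = 0 := by exact_mod_cast hsum
    have e₁ : (k 0 : ℚ) - k 1 = 5 * c₁ := by exact_mod_cast hc₁
    have e₂ : (k 1 : ℚ) - k 2 = 5 * c₂ := by exact_mod_cast hc₂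
    have e₃ : (k 2 : ℚ) - k 3 = 5 * c₃ := by exact_mod_cast hc₃
    have e₄ : (k 3 : ℚ) - k 4 = 5 * c₄ := by exact_mod_cast hc₄
    funext i
    fin_cases i <;>
      simp only [w1, w2, w3, w4, Pi.add_apply, zsmul_eq_mul, Pi.mul_apply, Pi.intCast_apply,
        Fin.reduceFinMk, Matrix.cons_val_zero, Matrix.cons_val_one, Matrix.cons_val] <;>
      linarith
  rw [hexpand]
  refine add_mem (add_mem (add_mem ?_ ?_) ?_) ?_ <;>
    exact AddSubgroup.zsmul_mem _ (hw _ (by simp)) _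

theorem A4.exists_intVec {a : Fin 5 → ℚ} (ha : a ∈ A4) :
    ∃ u : Fin 5 → ℤ, ∑ i, u i = 0 ∧ a = fun i => (u i : ℚ) := by
  choose u hu using ha.1
  refine ⟨u, ?_, funext hu⟩
  have h := ha.2
  simp only [hu] at h
  exact_mod_cast h

theorem form_intCast (u : Fin 5 → ℤ) :
    form (fun i => (u i : ℚ)) (fun i => (u i : ℚ)) = ((∑ i, u i ^ 2 : ℤ) : ℚ) := by
  simp [form, sq]

/-- `u` and `v` agree in `(ℤ/q)ⁿ` modulo the diagonal, up to a permutation of coordinates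
and a sign. -/
def SignPermCongr (q : ℕ) {n : ℕ} (u v : Fin n → ℤ) : Prop :=
  ∃ (σ : Equiv.Perm (Fin n)) (ε : ℤˣ) (c : ZMod q),
    ∀ i, ((ε * u (σ i) : ℤ) : ZMod q) = v i + c

namespace SignPermCongr

variable {q n : ℕ} {u v w : Fin n → ℤ}

theorem comp_perm (u : Fin n → ℤ) (σ : Equiv.Perm (Fin n)) : SignPermCongr q u (u ∘ σ) :=
  ⟨σ, 1, 0, fun i => by simp⟩

theorem symm (h : SignPermCongr q u v) : SignPermCongr q v u := by
  obtain ⟨σ, ε, c, h⟩ := h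
  refine ⟨σ.symm, ε, -(ε * c), fun i => ?_⟩
  have hi := h (σ.symm i)
  rw [Equiv.apply_symm_apply] at hi
  have hε : ((ε * ε : ℤ) : ZMod q) = 1 := by rw [Int.units_coe_mul_self, Int.cast_one]
  push_cast at hi hε ⊢
  linear_combination (-(ε : ZMod q)) * hi + (u i : ZMod q) * hε

theorem trans (huv : SignPermCongr q u v) (hvw : SignPermCongr q v w) :
    SignPermCongr q u w := by
  obtain ⟨σ, ε, c, huv⟩ := huv
  obtain ⟨τ, δ, d, hvw⟩ := hvw
  refine ⟨τ.trans σ, δ * ε, d + δ * c, fun i => ?_⟩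
  have hi := huv (τ i)
  have hj := hvw i
  push_cast at hi hj ⊢
  simp only [Equiv.trans_apply]
  linear_combination (δ : ZMod q) * hi + hj

end SignPermCongr

/-- A sorted vector of norm `m`; junk for `m ∉ {2, 4, 6, 8, 10}`. -/
def normRep : ℤ → Fin 5 → ℤ
  | 2 => ![-1, 0, 0, 0, 1]
  | 4 => ![-1, -1, 0, 1, 1]
  | 6 => ![-2, 0, 0, 1, 1]
  | 8 => ![-2, 0, 0, 0, 2]
  | _ => ![-2, -1, 0, 1, 2]

/-- The sorted vectors of `A₄` of norm at most `10`, except `0`. -/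
def sortedShortVectors : Finset (Fin 5 → ℤ) :=
  {![-1, 0, 0, 0, 1], ![-1, -1, 0, 1, 1], ![-2, 0, 0, 1, 1], ![-1, -1, 0, 0, 2],
    ![-2, 0, 0, 0, 2], ![-1, -1, -1, 1, 2], ![-2, -1, 1, 1, 1], ![-2, -1, 0, 1, 2]}

set_option maxRecDepth 10000 in
theorem mem_sortedShortVectors {g : Fin 5 → ℤ} (hg : Monotone g) (hsum : ∑ i, g i = 0)
    (hpos : 0 < ∑ i, g i ^ 2) (hle : ∑ i, g i ^ 2 ≤ 10) : g ∈ sortedShortVectors := by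
  have hcases : ∀ a ∈ Finset.Icc (-3 : ℤ) 3, ∀ b ∈ Finset.Icc a 3, ∀ c ∈ Finset.Icc b 3,
      ∀ d ∈ Finset.Icc c 3, ∀ e ∈ Finset.Icc d 3, a + b + c + d + e = 0 →
      0 < a ^ 2 + b ^ 2 + c ^ 2 + d ^ 2 + e ^ 2 → a ^ 2 + b ^ 2 + c ^ 2 + d ^ 2 + e ^ 2 ≤ 10 →
      ![a, b, c, d, e] ∈ sortedShortVectors := by
    decide
  rw [Fin.sum_univ_five] at hsum hpos hle
  have h₀₁ : g 0 ≤ g 1 := hg (by decide)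
  have h₁₂ : g 1 ≤ g 2 := hg (by decide)
  have h₂₃ : g 2 ≤ g 3 := hg (by decide)
  have h₃₄ : g 3 ≤ g 4 := hg (by decide)
  have h₀ : -3 ≤ g 0 := by nlinarith
  have h₄ : g 4 ≤ 3 := by nlinarith
  have heta : g = ![g 0, g 1, g 2, g 3, g 4] := by ext i; fin_cases i <;> rfl
  rw [heta]
  exact hcases (g 0) (Finset.mem_Icc.2 ⟨h₀, by omega⟩) (g 1) (Finset.mem_Icc.2 ⟨h₀₁, by omega⟩)
    (g 2) (Finset.mem_Icc.2 ⟨h₁₂, by omega⟩) (g 3) (Finset.mem_Icc.2 ⟨h₂₃, by omega⟩)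
    (g 4) (Finset.mem_Icc.2 ⟨h₃₄, h₄⟩) hsum hpos hle

theorem signPermCongr_normRep_of_mem {g : Fin 5 → ℤ} (hg : g ∈ sortedShortVectors) :
    SignPermCongr 5 g (normRep (∑ i, g i ^ 2)) := by
  simp only [sortedShortVectors, Finset.mem_insert, Finset.mem_singleton] at hg
  rcases hg with rfl | rfl | rfl | rfl | rfl | rfl | rfl | rfl
  · exact ⟨1, 1, 0, by decide⟩
  · exact ⟨1, 1, 0, by decide⟩
  · exact ⟨1, 1, 0, by decide⟩
  · exact ⟨Fin.revPerm, -1, 0, by decide⟩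
  · exact ⟨1, 1, 0, by decide⟩
  · exact ⟨Equiv.swap 0 3, -1, 1, by decide⟩
  · exact ⟨Equiv.swap 1 4, -1, -1, by decide⟩
  · exact ⟨1, 1, 0, by decide⟩

theorem signPermCongr_normRep {u : Fin 5 → ℤ} (hsum : ∑ i, u i = 0)
    (hpos : 0 < ∑ i, u i ^ 2) (hle : ∑ i, u i ^ 2 ≤ 10) :
    SignPermCongr 5 u (normRep (∑ i, u i ^ 2)) := by
  set g := u ∘ Tuple.sort u
  have hgsum : ∑ i, g i = ∑ i, u i := Equiv.sum_comp _ u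
  have hgsq : ∑ i, g i ^ 2 = ∑ i, u i ^ 2 := Equiv.sum_comp _ (u · ^ 2)
  rw [← hgsq] at hpos hle ⊢
  exact (SignPermCongr.comp_perm u _).trans (signPermCongr_normRep_of_mem
    (mem_sortedShortVectors (Tuple.monotone_sort u) (hgsum.trans hsum) hpos hle))

theorem signPermCongr_of_sum_sq_eq {u v : Fin 5 → ℤ} (hu : ∑ i, u i = 0) (hv : ∑ i, v i = 0)
    (huv : ∑ i, u i ^ 2 = ∑ i, v i ^ 2) (hpos : 0 < ∑ i, u i ^ 2) (hle : ∑ i, u i ^ 2 ≤ 10) :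
    SignPermCongr 5 u v := by
  have hv' := signPermCongr_normRep hv (huv ▸ hpos) (huv ▸ hle)
  rw [← huv] at hv'
  exact (signPermCongr_normRep hu hpos hle).trans hv'.symm

/-- `O(A₄^∨(5))` acts transitively on the classes of the same norm in
the standard representative system of the discriminant group: for `a, b ∈ A₄` of the
same norm `m ∈ {2,4,6,8,10}` there are a permutation `σ` and a sign `ε` with
`ε·(a_{σ(1)},…,a_{σ(5)}) − b ∈ 5·A₄^∨`. -/
theorem O_A4dual5_transitive_on_classes :
    ∀ m ∈ ({2, 4, 6, 8, 10} : Set ℚ), ∀ a b : Fin 5 → ℚ, a ∈ A4 → b ∈ A4 →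
      form a a = m → form b b = m →
      ∃ (σ : Equiv.Perm (Fin 5)) (ε : ℤˣ), ∃ y ∈ A4dual,
        (fun i => ((ε : ℤ) : ℚ) * a (σ i)) - b = (5 : ℚ) • y := by
  intro m hm a b ha hb hfa hfb
  obtain ⟨u, hu, rfl⟩ := A4.exists_intVec ha
  obtain ⟨v, hv, rfl⟩ := A4.exists_intVec hb
  rw [form_intCast] at hfa hfb
  have hm : (0 : ℚ) < m ∧ m ≤ 10 := by rcases hm with rfl | rfl | rfl | rfl | rfl <;> norm_num
  obtain ⟨σ, ε, c, hc⟩ := signPermCongr_of_sum_sq_eq hu hv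
    (by exact_mod_cast hfa.trans hfb.symm) (by exact_mod_cast hfa ▸ hm.1)
    (by exact_mod_cast hfa ▸ hm.2)
  set k : Fin 5 → ℤ := fun i => ε * u (σ i) - v i
  have hk : ∀ i, (k i : ZMod 5) = c := fun i => by simp [k, hc i]
  have hksum : ∑ i, k i = 0 := by
    simp [k, Finset.sum_sub_distrib, ← Finset.mul_sum, Equiv.sum_comp σ u, hu, hv]
  refine ⟨σ, ε, _, intVec_div_five_mem_A4dual k hksum fun i => (hk i).trans (hk 0).symm, ?_⟩
  funext i
  simp only [Pi.sub_apply, Int.cast_sub, Int.cast_mul, Pi.smul_apply, smul_eq_mul, k]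
  ring
end
end

section
/- The natural homomorphism O(A_4^∨(5)) → O(D) is surjective: let f be an additive group automorphism of D = ((1/5)A_4)/A_4^∨ preserving the discriminant quadratic form, i.e. such that whenever x, y ∈ (1/5)A_4 satisfy f(x + A_4^∨) = y + A_4^∨ one has 5⟨x,x⟩ − 5⟨y,y⟩ ∈ 2ℤ. Then there exists a ℚ-linear automorphism g of V with ⟨g(x), g(y)⟩ = ⟨x,y⟩ for all x, y ∈ V and g(A_4^∨) = A_4^∨ such that f(x + A_4^∨) = g(x) + A_4^∨ for all x ∈ (1/5)A_4. -/
open scoped BigOperators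

noncomputable section

/-!
Write `r(x) ∈ (ℤ/5)⁵` for the reduction of the integer vector `5x`, `x ∈ (1/5)A₄`. Then
`x ∈ A₄^∨` iff `r(x)` is constant, so normalising the last coordinate to `0` identifies `D` with
`(ℤ/5)³`. Since `5⟨x,x⟩ = ∑ (5xᵢ)² / 5` and `∑ (5xᵢ)² ≡ ∑ 5xᵢ = 0 (mod 2)`, the discriminant form
`5⟨x,x⟩ mod 2ℤ` is determined by `∑ r(x)ᵢ² ∈ ℤ/5`. Signed coordinate permutations are isometries
of `V` preserving `A₄^∨`, and they act on `D`. An automorphism of `D` preserving the form is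
determined by the images of a basis, and a finite computation shows that every triple on which the
form and its polarisation take the values they take on the basis is the image of the basis under
one of the `240` signed permutations.
-/

section SignedPerm

variable {R : Type*} [CommRing R] {ι : Type*}

def boolSign (b : Bool) : R := cond b 1 (-1)

@[simp] lemma boolSign_mul_self (b : Bool) : (boolSign b : R) * boolSign b = 1 := by
  cases b <;> simp [boolSign]

@[simp] lemma Int.cast_boolSign (b : Bool) : ((boolSign b : ℤ) : R) = boolSign b := by
  cases b <;> simp [boolSign]

def signedPerm (σ : Equiv.Perm ι) (b : Bool) : (ι → R) →ₗ[R] (ι → R) where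
  toFun v i := boolSign b * v (σ⁻¹ i)
  map_add' v w := by ext i; simp [mul_add]
  map_smul' c v := by ext i; simp [mul_left_comm]

@[simp] lemma signedPerm_apply (σ : Equiv.Perm ι) (b : Bool) (v : ι → R) (i : ι) :
    signedPerm σ b v i = boolSign b * v (σ⁻¹ i) := rfl

lemma signedPerm_const (σ : Equiv.Perm ι) (b : Bool) (c : R) :
    signedPerm σ b (fun _ => c) = fun _ => boolSign b * c := rfl

@[simp] lemma signedPerm_signedPerm_inv (σ : Equiv.Perm ι) (b : Bool) (v : ι → R) :
    signedPerm σ b (signedPerm σ⁻¹ b v) = v := by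
  ext i; simp [← mul_assoc]

lemma sum_signedPerm [Fintype ι] (σ : Equiv.Perm ι) (b : Bool) (v : ι → R) :
    ∑ i, signedPerm σ b v i = boolSign b * ∑ i, v i := by
  rw [Finset.mul_sum]
  exact Equiv.sum_comp σ⁻¹ (fun i => boolSign b * v i)

lemma dotProduct_signedPerm [Fintype ι] (σ : Equiv.Perm ι) (b : Bool) (v w : ι → R) :
    signedPerm σ b v ⬝ᵥ signedPerm σ b w = v ⬝ᵥ w := by
  simp only [dotProduct, signedPerm_apply]
  rw [← Equiv.sum_comp σ⁻¹ (fun i => v i * w i)]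
  refine Finset.sum_congr rfl fun i _ => ?_
  linear_combination v (σ⁻¹ i) * w (σ⁻¹ i) * boolSign_mul_self (R := R) b

end SignedPerm

def reduceMod : (Fin 5 → ZMod 5) →ₗ[ZMod 5] (Fin 3 → ZMod 5) where
  toFun v := ![v 0 - v 4, v 1 - v 4, v 2 - v 4]
  map_add' v w := by ext j; fin_cases j <;> simp <;> ring
  map_smul' c v := by ext j; fin_cases j <;> simp <;> ring

def liftMod : (Fin 3 → ZMod 5) →ₗ[ZMod 5] (Fin 5 → ZMod 5) where
  toFun d := ![d 0, d 1, d 2, -(d 0 + d 1 + d 2), 0]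
  map_add' v w := by ext j; fin_cases j <;> simp; abel
  map_smul' c v := by ext j; fin_cases j <;> simp [mul_add]

def modelQuad (d : Fin 3 → ZMod 5) : ZMod 5 := d 0 ^ 2 + d 1 ^ 2 + d 2 ^ 2 + (d 0 + d 1 + d 2) ^ 2

def modelAct (σ : Equiv.Perm (Fin 5)) (b : Bool) : (Fin 3 → ZMod 5) →ₗ[ZMod 5] (Fin 3 → ZMod 5) :=
  reduceMod ∘ₗ signedPerm σ b ∘ₗ liftMod

lemma reduceMod_liftMod (d : Fin 3 → ZMod 5) : reduceMod (liftMod d) = d := by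
  ext j; fin_cases j <;> simp [reduceMod, liftMod]

lemma liftMod_reduceMod {v : Fin 5 → ZMod 5} (hv : ∑ i, v i = 0) :
    liftMod (reduceMod v) = v - fun _ => v 4 := by
  rw [Fin.sum_univ_five] at hv
  have h5 : (5 : ZMod 5) = 0 := rfl
  ext i; fin_cases i <;> simp [reduceMod, liftMod]
  linear_combination -hv + v 4 * h5

lemma reduceMod_const (c : ZMod 5) : reduceMod (fun _ => c) = 0 := by
  ext j; fin_cases j <;> simp [reduceMod]

lemma reduceMod_eq_zero_iff {v : Fin 5 → ZMod 5} (hv : ∑ i, v i = 0) :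
    reduceMod v = 0 ↔ ∀ i, v i = v 4 := by
  constructor
  · intro h i
    have := congrFun (liftMod_reduceMod hv) i
    rw [h, map_zero] at this
    exact (sub_eq_zero.mp this.symm)
  · intro h
    ext j; fin_cases j <;> simp [reduceMod, h]

lemma modelAct_reduceMod (σ : Equiv.Perm (Fin 5)) (b : Bool) {v : Fin 5 → ZMod 5}
    (hv : ∑ i, v i = 0) : modelAct σ b (reduceMod v) = reduceMod (signedPerm σ b v) := by
  simp only [modelAct, LinearMap.comp_apply, liftMod_reduceMod hv, map_sub, signedPerm_const,
    reduceMod_const, sub_zero]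

lemma modelQuad_eq_sum_sq (d : Fin 3 → ZMod 5) : modelQuad d = ∑ i, liftMod d i ^ 2 := by
  simp [modelQuad, liftMod, Fin.sum_univ_five]
  ring

lemma modelQuad_reduceMod {v : Fin 5 → ZMod 5} (hv : ∑ i, v i = 0) :
    modelQuad (reduceMod v) = ∑ i, v i ^ 2 := by
  rw [modelQuad_eq_sum_sq, liftMod_reduceMod hv]
  simp only [Pi.sub_apply, Fin.sum_univ_five] at hv ⊢
  have h5 : (5 : ZMod 5) = 0 := rfl
  linear_combination (-2 * v 4) * hv + v 4 ^ 2 * h5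

set_option synthInstance.maxSize 2000 in
set_option maxRecDepth 100000 in
/-- The isometry group of the discriminant form is `±S₅`, checked over all of `(ℤ/5)³`; the
quantifiers are nested so that `decide` discards a candidate `c₀` or `c₁` as early as possible. -/
theorem exists_modelAct_single_eq :
    ∀ c₀ : Fin 3 → ZMod 5, modelQuad c₀ = modelQuad (Pi.single 0 1) →
    ∀ c₁ : Fin 3 → ZMod 5, modelQuad c₁ = modelQuad (Pi.single 1 1) →
    modelQuad (c₀ + c₁) = modelQuad (Pi.single 0 1 + Pi.single 1 1) →
    ∀ c₂ : Fin 3 → ZMod 5, modelQuad c₂ = modelQuad (Pi.single 2 1) →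
    modelQuad (c₀ + c₂) = modelQuad (Pi.single 0 1 + Pi.single 2 1) →
    modelQuad (c₁ + c₂) = modelQuad (Pi.single 1 1 + Pi.single 2 1) →
    ∃ σ : Equiv.Perm (Fin 5), ∃ b : Bool, modelAct σ b (Pi.single 0 1) = c₀ ∧
      modelAct σ b (Pi.single 1 1) = c₁ ∧ modelAct σ b (Pi.single 2 1) = c₂ := by
  decide

lemma exists_modelAct_eq (F : (Fin 3 → ZMod 5) →+ (Fin 3 → ZMod 5))
    (hF : ∀ d, modelQuad (F d) = modelQuad d) : ∃ σ b, ∀ d, F d = modelAct σ b d := by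
  have hF₂ : ∀ d e, modelQuad (F d + F e) = modelQuad (d + e) := fun d e => by
    rw [← map_add, hF]
  obtain ⟨σ, b, h₀, h₁, h₂⟩ :=
    exists_modelAct_single_eq _ (hF _) _ (hF _) (hF₂ _ _) _ (hF _) (hF₂ _ _) (hF₂ _ _)
  have hext : F.toZModLinearMap 5 = modelAct σ b := by
    refine (Pi.basisFun (ZMod 5) (Fin 3)).ext fun i => ?_
    fin_cases i <;> simp [h₀, h₁, h₂]
  exact ⟨σ, b, LinearMap.ext_iff.mp hext⟩

lemma mem_V0_iff {x : Fin 5 → ℚ} : x ∈ V0 ↔ ∑ i, x i = 0 := Iff.rfl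

lemma mem_fifthA4_iff {x : Fin 5 → ℚ} :
    x ∈ fifthA4 ↔ (∀ i, ∃ n : ℤ, 5 * x i = n) ∧ ∑ i, x i = 0 := by
  constructor
  · rintro ⟨a, ⟨ha, ha0⟩, rfl⟩
    refine ⟨fun i => ?_, ?_⟩
    · obtain ⟨n, hn⟩ := ha i
      exact ⟨n, by simp [hn]⟩
    · simp [← Finset.mul_sum, ha0]
  · rintro ⟨h, h0⟩
    refine ⟨(5 : ℚ) • x, ⟨fun i => ?_, ?_⟩, ?_⟩
    · simpa using h i
    · simp [← Finset.mul_sum, h0]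
    · simp [smul_smul]

lemma mem_A4dual_iff {x : Fin 5 → ℚ} :
    x ∈ A4dual ↔ ∑ i, x i = 0 ∧ ∀ i, ∃ n : ℤ, x i - x 4 = n := by
  constructor
  · intro hx
    induction hx using AddSubgroup.closure_induction with
    | mem w hw =>
      rcases hw with rfl | rfl | rfl | rfl <;>
        refine ⟨by simp [Fin.sum_univ_five, w1, w2, w3, w4]; norm_num, fun i => ?_⟩ <;>
        fin_cases i <;>
        norm_num [w1, w2, w3, w4, Matrix.cons_val_four, eq_comm (a := (1 : ℚ)),
          eq_comm (a := (0 : ℚ))]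
    | zero => exact ⟨by simp, fun _ => ⟨0, by simp⟩⟩
    | add x y _ _ hx hy =>
      refine ⟨by simp [Finset.sum_add_distrib, hx.1, hy.1], fun i => ?_⟩
      obtain ⟨m, hm⟩ := hx.2 i
      obtain ⟨n, hn⟩ := hy.2 i
      exact ⟨m + n, by push_cast [Pi.add_apply]; linarith⟩
    | neg x _ hx =>
      refine ⟨by simp [hx.1], fun i => ?_⟩
      obtain ⟨m, hm⟩ := hx.2 i
      exact ⟨-m, by push_cast [Pi.neg_apply]; linarith⟩
  · rintro ⟨h0, h⟩
    choose n hn using h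
    rw [Fin.sum_univ_five] at h0
    -- the coordinates of `x` in the basis dual to the simple roots `eᵢ - eᵢ₊₁`
    have hx : x = (n 0 - n 1) • w1 + (n 1 - n 2) • w2 + (n 2 - n 3) • w3 + n 3 • w4 := by
      have h4 := hn 4
      simp only [sub_self] at h4
      ext i
      fin_cases i <;> simp [w1, w2, w3, w4] <;> linarith [hn 0, hn 1, hn 2, hn 3]
    have hw : ∀ w ∈ ({w1, w2, w3, w4} : Set (Fin 5 → ℚ)), w ∈ A4dual :=
      fun w hw => AddSubgroup.subset_closure hw
    rw [hx]
    refine add_mem (add_mem (add_mem ?_ ?_) ?_) ?_ <;> exact zsmul_mem (hw _ (by simp)) _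

lemma A4dual_le_fifthA4 : A4dual ≤ fifthA4 := by
  intro x hx
  obtain ⟨h0, h⟩ := mem_A4dual_iff.mp hx
  choose n hn using h
  refine mem_fifthA4_iff.mpr ⟨fun i => ⟨5 * n i - ∑ j, n j, ?_⟩, h0⟩
  rw [Fin.sum_univ_five] at h0
  push_cast [Fin.sum_univ_five, ← hn]
  linarith

/-- The integer vector `5x`; only meaningful for `x ∈ (1/5)A₄`, where `5xᵢ` is an integer. -/
def scaledCoord (x : Fin 5 → ℚ) (i : Fin 5) : ℤ := (5 * x i).num

lemma scaledCoord_of_eq {x : Fin 5 → ℚ} {i : Fin 5} {n : ℤ} (h : 5 * x i = n) :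
    scaledCoord x i = n := by
  rw [scaledCoord, h, Rat.num_intCast]

lemma cast_scaledCoord {x : Fin 5 → ℚ} (hx : x ∈ fifthA4) (i : Fin 5) :
    (scaledCoord x i : ℚ) = 5 * x i := by
  obtain ⟨n, hn⟩ := (mem_fifthA4_iff.mp hx).1 i
  rw [scaledCoord_of_eq hn, hn]

lemma sum_scaledCoord {x : Fin 5 → ℚ} (hx : x ∈ fifthA4) : ∑ i, scaledCoord x i = 0 := by
  have : (∑ i, scaledCoord x i : ℚ) = 0 := by
    simp [cast_scaledCoord hx, ← Finset.mul_sum, (mem_fifthA4_iff.mp hx).2]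
  exact_mod_cast this

lemma cast_sum_sq_scaledCoord {x : Fin 5 → ℚ} (hx : x ∈ fifthA4) :
    ((∑ i, scaledCoord x i ^ 2 : ℤ) : ℚ) = 25 * form x x := by
  simp only [form, Finset.mul_sum, Int.cast_sum, Int.cast_pow, cast_scaledCoord hx]
  exact Finset.sum_congr rfl fun i _ => by ring

def residue (x : Fin 5 → ℚ) : Fin 5 → ZMod 5 := fun i => scaledCoord x i

lemma sum_residue {x : Fin 5 → ℚ} (hx : x ∈ fifthA4) : ∑ i, residue x i = 0 := by
  simp [residue, ← Int.cast_sum, sum_scaledCoord hx]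

lemma residue_add {x y : Fin 5 → ℚ} (hx : x ∈ fifthA4) (hy : y ∈ fifthA4) :
    residue (x + y) = residue x + residue y := by
  ext i
  have : scaledCoord (x + y) i = scaledCoord x i + scaledCoord y i :=
    scaledCoord_of_eq (by push_cast [cast_scaledCoord hx, cast_scaledCoord hy, Pi.add_apply]; ring)
  simp [residue, this]

lemma mem_A4dual_iff_residue {x : Fin 5 → ℚ} (hx : x ∈ fifthA4) :
    x ∈ A4dual ↔ ∀ i, residue x i = residue x 4 := by
  rw [mem_A4dual_iff, and_iff_right (mem_fifthA4_iff.mp hx).2]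
  refine forall_congr' fun i => ?_
  simp only [residue]
  rw [ZMod.intCast_eq_intCast_iff_dvd_sub]
  have key : ((scaledCoord x 4 - scaledCoord x i : ℤ) : ℚ) = -5 * (x i - x 4) := by
    push_cast [cast_scaledCoord hx]; ring
  constructor
  · rintro ⟨n, hn⟩
    refine ⟨-n, ?_⟩
    rw [hn] at key
    exact Int.cast_injective (α := ℚ) (by rw [key]; push_cast; ring)
  · rintro ⟨k, hk⟩
    refine ⟨-k, ?_⟩
    rw [hk] at key
    push_cast at key ⊢
    linarith

def discCoord : fifthA4 →+ (Fin 3 → ZMod 5) where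
  toFun x := reduceMod (residue x)
  map_zero' := by simp [show residue 0 = 0 from funext fun _ => by simp [residue, scaledCoord]]
  map_add' x y := by simp [residue_add x.2 y.2]

lemma discCoord_apply (x : fifthA4) : discCoord x = reduceMod (residue x) := rfl

lemma discCoord_eq_iff (x y : fifthA4) :
    discCoord x = discCoord y ↔ (x : Fin 5 → ℚ) - y ∈ A4dual := by
  have hxy := sub_mem x.2 y.2
  rw [← sub_eq_zero, ← map_sub, discCoord_apply, AddSubgroup.coe_sub,
    reduceMod_eq_zero_iff (sum_residue hxy), mem_A4dual_iff_residue hxy]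

lemma ker_discCoord : discCoord.ker = A4dual.addSubgroupOf fifthA4 := by
  ext x
  simpa [AddSubgroup.mem_addSubgroupOf] using discCoord_eq_iff x 0

lemma discCoord_surjective : Function.Surjective discCoord := by
  intro d
  let a : Fin 5 → ℤ :=
    ![(d 0).val, (d 1).val, (d 2).val, -((d 0).val + (d 1).val + (d 2).val), 0]
  have hx : (fun i => (a i : ℚ) / 5) ∈ fifthA4 := by
    refine mem_fifthA4_iff.mpr ⟨fun i => ⟨a i, by ring⟩, ?_⟩
    simp [a, Fin.sum_univ_five]
    ring
  refine ⟨⟨_, hx⟩, ?_⟩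
  have : residue (fun i => (a i : ℚ) / 5) = liftMod d := by
    ext i
    rw [residue, scaledCoord_of_eq (n := a i) (by ring)]
    fin_cases i <;> simp [a, liftMod]
  rw [discCoord_apply, this, reduceMod_liftMod]

def discEquiv : Disc ≃+ (Fin 3 → ZMod 5) :=
  (QuotientAddGroup.quotientAddEquivOfEq ker_discCoord.symm).trans
    (QuotientAddGroup.quotientKerEquivOfSurjective discCoord discCoord_surjective)

lemma discEquiv_mk (x : fifthA4) : discEquiv (QuotientAddGroup.mk x) = discCoord x := rfl

lemma modelQuad_discCoord (x : fifthA4) :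
    modelQuad (discCoord x) = ((∑ i, scaledCoord x i ^ 2 : ℤ) : ZMod 5) := by
  rw [discCoord_apply, modelQuad_reduceMod (sum_residue x.2)]
  push_cast [residue]
  rfl

lemma modelQuad_discCoord_eq {x y : fifthA4}
    (h : ∃ k : ℤ, 5 * form x x - 5 * form y y = 2 * k) :
    modelQuad (discCoord x) = modelQuad (discCoord y) := by
  obtain ⟨k, hk⟩ := h
  have : ∑ i, scaledCoord x i ^ 2 - ∑ i, scaledCoord y i ^ 2 = 5 * (2 * k) := by
    refine Int.cast_injective (α := ℚ) ?_
    rw [Int.cast_sub, cast_sum_sq_scaledCoord x.2, cast_sum_sq_scaledCoord y.2]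
    push_cast
    linarith
  rw [modelQuad_discCoord, modelQuad_discCoord, ← sub_eq_zero, ← Int.cast_sub, this]
  simp [show (5 : ZMod 5) = 0 from rfl]

section SignedPermLattice

variable (σ : Equiv.Perm (Fin 5)) (b : Bool)

lemma signedPerm_mem_V0 {x : Fin 5 → ℚ} (hx : x ∈ V0) : signedPerm σ b x ∈ V0 := by
  rw [mem_V0_iff, sum_signedPerm, mem_V0_iff.mp hx, mul_zero]

lemma signedPerm_mem_fifthA4 {x : Fin 5 → ℚ} (hx : x ∈ fifthA4) :
    signedPerm σ b x ∈ fifthA4 := by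
  refine mem_fifthA4_iff.mpr ⟨fun i => ⟨boolSign b * scaledCoord x (σ⁻¹ i), ?_⟩, ?_⟩
  · push_cast [cast_scaledCoord hx]; simp; ring
  · rw [sum_signedPerm, (mem_fifthA4_iff.mp hx).2, mul_zero]

lemma residue_signedPerm {x : Fin 5 → ℚ} (hx : x ∈ fifthA4) :
    residue (signedPerm σ b x) = signedPerm σ b (residue x) := by
  ext i
  rw [residue, scaledCoord_of_eq (n := boolSign b * scaledCoord x (σ⁻¹ i))]
  · simp [residue]
  · push_cast [cast_scaledCoord hx]; simp; ring

lemma signedPerm_mem_A4dual {x : Fin 5 → ℚ} (hx : x ∈ A4dual) :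
    signedPerm σ b x ∈ A4dual := by
  have hx' := A4dual_le_fifthA4 hx
  rw [mem_A4dual_iff_residue hx'] at hx
  rw [mem_A4dual_iff_residue (signedPerm_mem_fifthA4 σ b hx'), residue_signedPerm σ b hx']
  simp [hx]

lemma discCoord_signedPerm (x : fifthA4) :
    discCoord ⟨signedPerm σ b x, signedPerm_mem_fifthA4 σ b x.2⟩
      = modelAct σ b (discCoord x) := by
  rw [discCoord_apply, discCoord_apply, residue_signedPerm σ b x.2,
    modelAct_reduceMod σ b (sum_residue x.2)]

def signedPermV0 : V0 ≃ₗ[ℚ] V0 :=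
  LinearEquiv.ofLinearMap ((signedPerm σ b).restrict fun _ => signedPerm_mem_V0 σ b)
    ((signedPerm σ⁻¹ b).restrict fun _ => signedPerm_mem_V0 σ⁻¹ b)
    (by ext; simp [← mul_assoc]) (by ext; simp [← mul_assoc])

lemma signedPermV0_apply (x : V0) :
    (signedPermV0 σ b x : Fin 5 → ℚ) = signedPerm σ b x := rfl

lemma form_signedPermV0 (x y : V0) :
    form (signedPermV0 σ b x) (signedPermV0 σ b y) = form x y :=
  dotProduct_signedPerm σ b (x : Fin 5 → ℚ) y

lemma image_signedPermV0 :
    (fun x : V0 => (signedPermV0 σ b x : Fin 5 → ℚ)) '' {x : V0 | (x : Fin 5 → ℚ) ∈ A4dual}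
      = {v | v ∈ A4dual} := by
  ext v
  constructor
  · rintro ⟨x, hx, rfl⟩
    exact signedPerm_mem_A4dual σ b hx
  · intro hv
    have hv₀ : v ∈ V0 := (mem_A4dual_iff.mp hv).1
    exact ⟨⟨signedPerm σ⁻¹ b v, signedPerm_mem_V0 σ⁻¹ b hv₀⟩, signedPerm_mem_A4dual σ⁻¹ b hv,
      by simp [signedPermV0_apply]⟩

end SignedPermLattice

/-- The natural homomorphism `O(A₄^∨(5)) → O(D)` is surjective: every
automorphism `f` of the discriminant group `D = ((1/5)A₄)/A₄^∨` preserving the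
discriminant quadratic form is induced by a `ℚ`-linear isometry `g` of `V` with
`g(A₄^∨) = A₄^∨`. -/
theorem O_to_O_disc_surjective :
    ∀ f : Disc ≃+ Disc,
      (∀ x y : fifthA4, f (QuotientAddGroup.mk x) = QuotientAddGroup.mk y →
        ∃ k : ℤ, 5 * form (x : Fin 5 → ℚ) (x : Fin 5 → ℚ)
            - 5 * form (y : Fin 5 → ℚ) (y : Fin 5 → ℚ) = 2 * (k : ℚ)) →
      ∃ g : V0 ≃ₗ[ℚ] V0,
        (∀ x y : V0, form (g x : Fin 5 → ℚ) (g y : Fin 5 → ℚ)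
            = form (x : Fin 5 → ℚ) (y : Fin 5 → ℚ)) ∧
        ((fun x : V0 => (g x : Fin 5 → ℚ)) '' {x : V0 | (x : Fin 5 → ℚ) ∈ A4dual}
            = {v : Fin 5 → ℚ | v ∈ A4dual}) ∧
        (∀ (x : Fin 5 → ℚ) (hx : x ∈ fifthA4) (hx0 : x ∈ V0) (y : fifthA4),
          f (QuotientAddGroup.mk ⟨x, hx⟩) = QuotientAddGroup.mk y →
          (y : Fin 5 → ℚ) - (g ⟨x, hx0⟩ : Fin 5 → ℚ) ∈ A4dual) := by
  intro f hf
  let F := discEquiv.symm.trans (f.trans discEquiv)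
  have hF : ∀ x y : fifthA4, f (QuotientAddGroup.mk x) = QuotientAddGroup.mk y →
      discCoord y = F (discCoord x) := fun x y hxy => by
    simp [F, ← discEquiv_mk, hxy]
  have hFquad : ∀ d, modelQuad (F d) = modelQuad d := by
    intro d
    obtain ⟨x, rfl⟩ := discCoord_surjective d
    obtain ⟨y, hy⟩ := QuotientAddGroup.mk_surjective (f (QuotientAddGroup.mk x))
    rw [← hF x y hy.symm]
    exact (modelQuad_discCoord_eq (hf x y hy.symm)).symm
  obtain ⟨σ, b, hσ⟩ := exists_modelAct_eq F.toAddMonoidHom hFquad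
  refine ⟨signedPermV0 σ b, form_signedPermV0 σ b, image_signedPermV0 σ b, ?_⟩
  intro x hx hx0 y hxy
  refine (discCoord_eq_iff y ⟨_, signedPerm_mem_fifthA4 σ b hx⟩).mp ?_
  rw [hF ⟨x, hx⟩ y hxy]
  exact (hσ _).trans (discCoord_signedPerm σ b ⟨x, hx⟩).symm
end
end
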